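/- arXiv:math/0404188 — 6 statements merged into one kernel-verified Lean document; each statement's English description precedes it below -/
import Mathlib

section
/- Let k ≥ 3, let N be a prime with N > k, and let ν : ZMod N → ℝ with ν ≥ 0. (i) If ν satisfies the (m₀,t₀,L₀)-linear forms condition with error ε ≤ 1, then the function ν_{1/2} := (ν+1)/2 also satisfies the (m₀,t₀,L₀)-linear forms condition with error ε. (ii) If in addition ν satisfies the m₀-correlation condition with moment bounds (M_q), then ν_{1/2} satisfies the m₀-correlation condition with moment bounds (M'_q), where each M'_q depends only on q, m₀ and the original bounds (M_q). -/
open Finset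

/-- The average of `f` over `ZMod N`. -/
noncomputable def avgZ (N : ℕ) [NeZero N] (f : ZMod N → ℝ) : ℝ :=
  (∑ x : ZMod N, f x) / (N : ℝ)

/-- The Gowers inner product of a `{0,1}^d`-tuple of functions on `ZMod N`. -/
noncomputable def gowersInner (N : ℕ) [NeZero N] (d : ℕ)
    (f : (Fin d → Bool) → ZMod N → ℝ) : ℝ :=
  (∑ x : ZMod N, ∑ h : Fin d → ZMod N,
    ∏ ω : Fin d → Bool, f ω (x + ∑ i : Fin d, if ω i then h i else 0)) / (N : ℝ) ^ (d + 1)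

/-- The Gowers uniformity norm `‖f‖_{U^d}`. -/
noncomputable def gowersNorm (N : ℕ) [NeZero N] (d : ℕ) (f : ZMod N → ℝ) : ℝ :=
  (gowersInner N d fun _ => f) ^ ((1 : ℝ) / 2 ^ d)

/-- The `(m₀,t₀,L₀)`-linear forms condition with error `ε`. -/
def LinearFormsCondition (N : ℕ) [Fact (Nat.Prime N)] (ν : ZMod N → ℝ)
    (m₀ t₀ L₀ : ℕ) (ε : ℝ) : Prop :=
  ∀ (m t : ℕ), 1 ≤ m → m ≤ m₀ → 1 ≤ t → t ≤ t₀ →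
    ∀ (L : Fin m → Fin t → ℚ) (b : Fin m → ZMod N),
      (∀ i j, (L i j).num.natAbs ≤ L₀ ∧ (L i j).den ≤ L₀) →
      (∀ i, L i ≠ 0) →
      (∀ i i', i ≠ i' → ¬ ∃ q : ℚ, L i = q • L i') →
      |(∑ x : Fin t → ZMod N, ∏ i : Fin m,
          ν (∑ j : Fin t, (L i j : ZMod N) * x j + b i)) / (N : ℝ) ^ t - 1| ≤ ε

/-- The `m₀`-correlation condition with moment bounds `M`. -/
def CorrelationCondition (N : ℕ) [NeZero N] (ν : ZMod N → ℝ) (m₀ : ℕ) (M : ℕ → ℝ) : Prop :=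
  ∀ m : ℕ, 1 < m → m ≤ m₀ →
    ∃ τ : ZMod N → ℝ, (∀ x, 0 ≤ τ x) ∧
      (∀ q : ℕ, 1 ≤ q → avgZ N (fun x => τ x ^ q) ≤ M q) ∧
      ∀ h : Fin m → ZMod N,
        avgZ N (fun x => ∏ i : Fin m, ν (x + h i)) ≤
          ∑ i : Fin m, ∑ j : Fin m, if i < j then τ (h i - h j) else 0

/-- `ν` is `k`-pseudorandom with error `ε` and moment bounds `M`. -/
def Pseudorandom (N : ℕ) [Fact (Nat.Prime N)] (k : ℕ) (ν : ZMod N → ℝ)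
    (ε : ℝ) (M : ℕ → ℝ) : Prop :=
  (∀ x, 0 ≤ ν x) ∧
  LinearFormsCondition N ν (k * 2 ^ (k - 1)) (3 * k - 4) k ε ∧
  CorrelationCondition N ν (2 ^ (k - 1)) M

/-- The dual function `DF` of `F` (with parameter `k`; uses the `U^{k-1}` box). -/
noncomputable def dualFn (N : ℕ) [NeZero N] (k : ℕ) (F : ZMod N → ℝ) (x : ZMod N) : ℝ :=
  (∑ h : Fin (k - 1) → ZMod N,
    ∏ ω ∈ Finset.univ.filter (fun ω : Fin (k - 1) → Bool => ω ≠ fun _ => false),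
      F (x + ∑ i : Fin (k - 1), if ω i then h i else 0)) / (N : ℝ) ^ (k - 1)

/-- The dual norm `‖g‖_{(U^{k-1})^*}`. -/
noncomputable def dualNorm (N : ℕ) [NeZero N] (k : ℕ) (g : ZMod N → ℝ) : ℝ :=
  sSup {r : ℝ | ∃ f : ZMod N → ℝ, gowersNorm N (k - 1) f ≤ 1 ∧
    r = |avgZ N (fun x => f x * g x)|}

/-!
Expanding the product gives `∏ i, (f i + 1) / 2 = 𝔼 S, ∏ i ∈ S, f i`, so an average of a product of
values of `(ν + 1) / 2` is the average over all subsets `S` of the corresponding averages for `ν`.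
For linear forms each of these is within `ε` of `1`, the subsystem indexed by `S` being admissible
again. For correlations, the subsets with at least two elements are controlled by the single
majorant `σ = ∑_{2 ≤ s ≤ m₀} τ_s` built from the majorants `τ_s` of the `s`-fold correlations,
and those with at most one element by `𝔼 ν ≤ max (M 1) 1`, which follows from
`(𝔼 ν)² = 𝔼_d 𝔼_x ν x * ν (x + d) ≤ 𝔼 τ₂`. Hence `σ + max (M 1) 1` majorizes the correlations
of `(ν + 1) / 2`, and its moments are bounded by the power mean inequality.
-/

open scoped BigOperators

lemma avgZ_eq_expect {N : ℕ} [NeZero N] (f : ZMod N → ℝ) : avgZ N f = 𝔼 x, f x := by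
  rw [avgZ, Fintype.expect_eq_sum_div_card, ZMod.card]

lemma sum_div_pow_eq_expect {N t : ℕ} [NeZero N] (f : (Fin t → ZMod N) → ℝ) :
    (∑ x, f x) / (N : ℝ) ^ t = 𝔼 x, f x := by
  rw [Fintype.expect_eq_sum_div_card, Fintype.card_pi, prod_const, card_univ, ZMod.card,
    Fintype.card_fin, Nat.cast_pow]

lemma Finset.abs_expect_sub_le {ι K : Type*} [Field K] [LinearOrder K] [IsStrictOrderedRing K]
    {s : Finset ι} (hs : s.Nonempty) {f : ι → K} {c ε : K} (h : ∀ i ∈ s, |f i - c| ≤ ε) :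
    |𝔼 i ∈ s, f i - c| ≤ ε := by
  rw [← expect_const hs c, ← expect_sub_distrib]
  exact (abs_expect_le s _).trans (expect_le hs h)

lemma prod_add_one_div_two_eq_expect {ι K : Type*} [Fintype ι] [Field K] [CharZero K]
    (f : ι → K) : ∏ i, (f i + 1) / 2 = 𝔼 S : Finset ι, ∏ i ∈ S, f i := by
  classical
  rw [prod_div_distrib, Fintype.prod_add, Fintype.expect_eq_sum_div_card, Fintype.card_finset]
  simp

lemma Finset.prod_eq_prod_orderEmbOfFin {α M : Type*} [LinearOrder α] [CommMonoid M] (S : Finset α)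
    (g : α → M) : ∏ i ∈ S, g i = ∏ k : Fin #S, g (S.orderEmbOfFin rfl k) := by
  rw [← prod_coe_sort S g]
  exact ((S.orderIsoOfFin rfl).toEquiv.prod_comp fun a => g a).symm

theorem LinearFormsCondition.abs_expect_prod_sub_one_le {N : ℕ} [Fact N.Prime] {ν : ZMod N → ℝ}
    {m₀ t₀ L₀ : ℕ} {ε : ℝ} (hν : LinearFormsCondition N ν m₀ t₀ L₀ ε) {m t : ℕ} (hm : m ≤ m₀)
    (ht : 1 ≤ t) (ht₀ : t ≤ t₀) {L : Fin m → Fin t → ℚ} (b : Fin m → ZMod N)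
    (hL : ∀ i j, (L i j).num.natAbs ≤ L₀ ∧ (L i j).den ≤ L₀) (hL0 : ∀ i, L i ≠ 0)
    (hLind : ∀ i i', i ≠ i' → ¬ ∃ q : ℚ, L i = q • L i') {S : Finset (Fin m)} (hS : S.Nonempty) :
    |𝔼 x : Fin t → ZMod N, ∏ i ∈ S, ν (∑ j, (L i j : ZMod N) * x j + b i) - 1| ≤ ε := by
  set e := S.orderEmbOfFin rfl
  have := hν #S t hS.card_pos ((card_le_univ S).trans (by simpa using hm)) ht ht₀
    (fun k => L (e k)) (fun k => b (e k)) (fun _ _ => hL _ _) (fun _ => hL0 _)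
    (fun k k' hkk' => hLind _ _ (e.injective.ne hkk'))
  simpa only [prod_eq_prod_orderEmbOfFin S, sum_div_pow_eq_expect] using this

theorem LinearFormsCondition.half_add_one {N : ℕ} [Fact N.Prime] {ν : ZMod N → ℝ}
    {m₀ t₀ L₀ : ℕ} {ε : ℝ} (hν : LinearFormsCondition N ν m₀ t₀ L₀ ε) :
    LinearFormsCondition N (fun x => (ν x + 1) / 2) m₀ t₀ L₀ ε := by
  intro m t hm hm₀ ht ht₀ L b hL hL0 hLind
  have hε : 0 ≤ ε := (abs_nonneg _).trans (hν m t hm hm₀ ht ht₀ L b hL hL0 hLind)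
  rw [sum_div_pow_eq_expect]
  simp_rw [prod_add_one_div_two_eq_expect]
  rw [expect_comm]
  refine abs_expect_sub_le univ_nonempty fun S _ => ?_
  rcases S.eq_empty_or_nonempty with rfl | hS
  · simpa using hε
  · exact hν.abs_expect_prod_sub_one_le hm₀ ht ht₀ b hL hL0 hLind hS

def pairSum {G : Type*} [Sub G] {m : ℕ} (τ : G → ℝ) (h : Fin m → G) : ℝ :=
  ∑ i, ∑ j, if i < j then τ (h i - h j) else 0

section pairSum

variable {G : Type*} [Sub G] {m : ℕ} {σ τ : G → ℝ}

lemma pairSum_nonneg (hτ : ∀ x, 0 ≤ τ x) (h : Fin m → G) : 0 ≤ pairSum τ h :=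
  sum_nonneg fun _ _ => sum_nonneg fun _ _ => by split_ifs <;> simp [hτ]

lemma pairSum_mono (hστ : ∀ x, σ x ≤ τ x) (h : Fin m → G) : pairSum σ h ≤ pairSum τ h :=
  sum_le_sum fun _ _ => sum_le_sum fun _ _ => by split_ifs <;> simp [hστ]

lemma pairSum_comp_le (hτ : ∀ x, 0 ≤ τ x) (h : Fin m → G) {n : ℕ} {e : Fin n → Fin m}
    (he : StrictMono e) : pairSum τ (h ∘ e) ≤ pairSum τ h := by
  let F : Fin m × Fin m → ℝ := fun p => if p.1 < p.2 then τ (h p.1 - h p.2) else 0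
  have hF : ∀ p, 0 ≤ F p := fun p => by simp only [F]; split_ifs <;> simp [hτ]
  let e₁ : Fin n ↪ Fin m := ⟨e, he.injective⟩
  let e₂ : Fin n × Fin n ↪ Fin m × Fin m := e₁.prodMap e₁
  calc pairSum τ (h ∘ e) = ∑ p ∈ univ.map e₂, F p := by
        simp only [pairSum, sum_map, ← Fintype.sum_prod_type', F, e₂, e₁,
          Function.Embedding.coe_prodMap, Function.Embedding.coeFn_mk, Prod.map_fst, Prod.map_snd,
          he.lt_iff_lt, Function.comp_apply]
    _ ≤ ∑ p, F p := sum_le_univ_sum_of_nonneg hF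
    _ = pairSum τ h := Fintype.sum_prod_type' fun i j => F (i, j)

lemma pairSum_add_const (h : Fin m → G) (hm : 2 ≤ m) {A : ℝ} (hA : 0 ≤ A) :
    pairSum σ h + A ≤ pairSum (fun x => σ x + A) h := by
  have hsplit : pairSum (fun x => σ x + A) h = pairSum σ h + pairSum (fun _ => A) h := by
    simp only [pairSum, ← sum_add_distrib]
    exact sum_congr rfl fun i _ => sum_congr rfl fun j _ => by split_ifs <;> simp
  have hterm : ∀ i j : Fin m, 0 ≤ if i < j then A else 0 := fun i j => by split_ifs <;> simp [hA]
  have hpair : A ≤ pairSum (fun _ => A) h :=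
    calc A = if (⟨0, by omega⟩ : Fin m) < ⟨1, by omega⟩ then A else 0 := by simp
      _ ≤ ∑ j, if (⟨0, by omega⟩ : Fin m) < j then A else 0 :=
          single_le_sum (fun j _ => hterm _ j) (mem_univ _)
      _ ≤ pairSum (fun _ => A) h :=
          single_le_sum (f := fun i => ∑ j, if i < j then A else 0)
            (fun i _ => sum_nonneg fun j _ => hterm i j) (mem_univ _)
  linarith

end pairSum

lemma expect_sum_pow_le {ι κ : Type*} [Fintype κ] (s : Finset ι) {f : ι → κ → ℝ}
    (hf : ∀ i ∈ s, ∀ x, 0 ≤ f i x) {q : ℕ} (hq : 1 ≤ q) {B : ℝ}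
    (hB : ∀ i ∈ s, 𝔼 x, f i x ^ q ≤ B) : 𝔼 x, (∑ i ∈ s, f i x) ^ q ≤ (#s : ℝ) ^ q * B := by
  obtain ⟨n, rfl⟩ := Nat.exists_eq_add_of_le' hq
  calc 𝔼 x, (∑ i ∈ s, f i x) ^ (n + 1)
      ≤ 𝔼 x, (#s : ℝ) ^ n * ∑ i ∈ s, f i x ^ (n + 1) :=
        expect_le_expect fun x _ => pow_sum_le_card_mul_sum_pow (fun i hi => hf i hi x) n
    _ = (#s : ℝ) ^ n * ∑ i ∈ s, 𝔼 x, f i x ^ (n + 1) := by rw [← mul_expect, expect_sum_comm]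
    _ ≤ (#s : ℝ) ^ n * (#s * B) := by
        gcongr
        simpa using sum_le_card_nsmul s _ B hB
    _ = (#s : ℝ) ^ (n + 1) * B := by ring

lemma sq_expect_eq_expect_mul_add {G : Type*} [AddCommGroup G] [Fintype G] (f : G → ℝ) :
    (𝔼 x, f x) ^ 2 = 𝔼 d, 𝔼 x, f x * f (x + d) := by
  rw [sq, Fintype.expect_mul_expect, expect_comm univ univ fun d x => f x * f (x + d)]
  exact expect_congr rfl fun x _ => (Fintype.expect_equiv (Equiv.addLeft x) _ _ fun _ => rfl).symm

def IsCorrelationMajorant {G : Type*} [AddCommGroup G] [Fintype G] (ν : G → ℝ) (m₀ : ℕ)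
    (τ : G → ℝ) : Prop :=
  ∀ m : ℕ, 1 < m → m ≤ m₀ → ∀ h : Fin m → G, 𝔼 x, ∏ i, ν (x + h i) ≤ pairSum τ h

namespace IsCorrelationMajorant

variable {G : Type*} [AddCommGroup G] [Fintype G] {ν τ : G → ℝ} {m₀ m : ℕ}

theorem expect_prod_le (hτ : IsCorrelationMajorant ν m₀ τ) (hτ0 : ∀ x, 0 ≤ τ x) (hm : m ≤ m₀)
    (h : Fin m → G) {S : Finset (Fin m)} (hS : 2 ≤ #S) :
    𝔼 x, ∏ i ∈ S, ν (x + h i) ≤ pairSum τ h := by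
  simp_rw [prod_eq_prod_orderEmbOfFin S]
  exact (hτ #S hS ((card_le_univ S).trans (by simpa using hm)) _).trans
    (pairSum_comp_le hτ0 h (S.orderEmbOfFin rfl).strictMono)

theorem expect_prod_le_add (hτ : IsCorrelationMajorant ν m₀ τ) (hτ0 : ∀ x, 0 ≤ τ x)
    (hm : m ≤ m₀) {A : ℝ} (hνA : 𝔼 x, ν x ≤ A) (hA : 1 ≤ A) (h : Fin m → G)
    (S : Finset (Fin m)) : 𝔼 x, ∏ i ∈ S, ν (x + h i) ≤ pairSum τ h + A := by
  have hP := pairSum_nonneg hτ0 h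
  obtain hS | hS := lt_or_ge #S 2
  · obtain hS0 | hS1 : #S = 0 ∨ #S = 1 := by omega
    · simp only [card_eq_zero.mp hS0, prod_empty, Fintype.expect_const]
      linarith
    · obtain ⟨i, rfl⟩ := card_eq_one.mp hS1
      have hshift : 𝔼 x, ν (x + h i) = 𝔼 x, ν x :=
        Fintype.expect_equiv (Equiv.addRight (h i)) _ _ fun _ => rfl
      simp only [prod_singleton, hshift]
      linarith
  · exact (hτ.expect_prod_le hτ0 hm h hS).trans (by linarith)

end IsCorrelationMajorant

noncomputable def halfMomentBound (m₀ : ℕ) (M : ℕ → ℝ) (q : ℕ) : ℝ :=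
  2 ^ (q - 1) * (((m₀ - 1 : ℕ) : ℝ) ^ q * M q + max (M 1) 1 ^ q)

namespace CorrelationCondition

variable {N : ℕ} [NeZero N] {ν : ZMod N → ℝ} {m₀ : ℕ} {M : ℕ → ℝ}

theorem sq_expect_le (hC : CorrelationCondition N ν m₀ M) (h2 : 2 ≤ m₀) :
    (𝔼 x, ν x) ^ 2 ≤ M 1 := by
  obtain ⟨τ, -, hτq, hτ⟩ := hC 2 one_lt_two h2
  have hshift : ∀ d, 𝔼 x, ν x * ν (x + d) ≤ τ (-d) := fun d => by
    simpa [avgZ_eq_expect, Fin.prod_univ_two, Fin.sum_univ_two] using hτ ![0, d]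
  calc (𝔼 x, ν x) ^ 2 = 𝔼 d, 𝔼 x, ν x * ν (x + d) := sq_expect_eq_expect_mul_add ν
    _ ≤ 𝔼 d, τ (-d) := expect_le_expect fun d _ => hshift d
    _ = 𝔼 d, τ d := Fintype.expect_equiv (Equiv.neg _) _ _ fun _ => rfl
    _ ≤ M 1 := by simpa [avgZ_eq_expect] using hτq 1 le_rfl

theorem expect_le_max (hC : CorrelationCondition N ν m₀ M) (h2 : 2 ≤ m₀) :
    𝔼 x, ν x ≤ max (M 1) 1 := by
  have hsq := hC.sq_expect_le h2
  rcases le_or_gt (𝔼 x, ν x) 1 with h | h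
  · exact le_max_of_le_right h
  · exact le_max_of_le_left (by nlinarith)

theorem exists_majorant (hC : CorrelationCondition N ν m₀ M) :
    ∃ σ : ZMod N → ℝ, (∀ x, 0 ≤ σ x) ∧
      (∀ q, 1 ≤ q → 𝔼 x, σ x ^ q ≤ ((m₀ - 1 : ℕ) : ℝ) ^ q * M q) ∧
      IsCorrelationMajorant ν m₀ σ := by
  choose! τ hτ0 hτq hτ using hC
  have hmem : ∀ s ∈ Icc 2 m₀, 1 < s ∧ s ≤ m₀ := fun s hs => by rw [mem_Icc] at hs; omega
  have hσ0 : ∀ s ∈ Icc 2 m₀, ∀ x, 0 ≤ τ s x := fun s hs => hτ0 s (hmem s hs).1 (hmem s hs).2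
  refine ⟨fun x => ∑ s ∈ Icc 2 m₀, τ s x, fun x => sum_nonneg fun s hs => hσ0 s hs x,
    fun q hq => ?_, fun m hm hm₀ h => ?_⟩
  · have hcard : #(Icc 2 m₀) = m₀ - 1 := by rw [Nat.card_Icc]; omega
    simpa only [hcard] using expect_sum_pow_le (Icc 2 m₀) hσ0 hq fun s hs => by
      simpa [avgZ_eq_expect] using hτq s (hmem s hs).1 (hmem s hs).2 q hq
  · have hτm := hτ m hm hm₀ h
    rw [avgZ_eq_expect] at hτm
    exact hτm.trans <| pairSum_mono
      (fun x => single_le_sum (fun s hs => hσ0 s hs x) (mem_Icc.2 ⟨hm, hm₀⟩)) h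

theorem half_add_one (hC : CorrelationCondition N ν m₀ M) :
    CorrelationCondition N (fun x => (ν x + 1) / 2) m₀ (halfMomentBound m₀ M) := by
  intro m hm hm₀
  obtain ⟨σ, hσ0, hσq, hσ⟩ := hC.exists_majorant
  set A := max (M 1) 1
  have hA : 1 ≤ A := le_max_right _ _
  have hνA : 𝔼 x, ν x ≤ A := hC.expect_le_max (hm.trans_le hm₀)
  refine ⟨fun x => σ x + A, fun x => by linarith [hσ0 x], fun q hq => ?_, fun h => ?_⟩
  · rw [avgZ_eq_expect]
    calc 𝔼 x, (σ x + A) ^ q ≤ 𝔼 x, 2 ^ (q - 1) * (σ x ^ q + A ^ q) :=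
          expect_le_expect fun x _ => add_pow_le (hσ0 x) (by linarith) q
      _ = 2 ^ (q - 1) * (𝔼 x, σ x ^ q + A ^ q) := by
          rw [← mul_expect, expect_add_distrib, Fintype.expect_const]
      _ ≤ halfMomentBound m₀ M q := by
          unfold halfMomentBound
          gcongr
          exact hσq q hq
  · rw [avgZ_eq_expect]
    simp_rw [prod_add_one_div_two_eq_expect]
    rw [expect_comm]
    exact (expect_le univ_nonempty fun S _ => hσ.expect_prod_le_add hσ0 hm₀ hνA hA h S).trans
      (pairSum_add_const h hm (by linarith))

end CorrelationCondition

/-- Lemma: `(ν + 1)/2` inherits the linear forms condition (with the same error)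
and the correlation condition (with new moment bounds depending only on
`m₀`, `q` and the original bounds). -/
theorem half_measure_pseudorandom (m₀ : ℕ) (M : ℕ → ℝ) :
    ∃ M' : ℕ → ℝ,
      ∀ (k t₀ L₀ : ℕ), 3 ≤ k →
        ∀ (N : ℕ) [Fact (Nat.Prime N)], k < N →
          ∀ ν : ZMod N → ℝ, (∀ x, 0 ≤ ν x) →
            ∀ ε : ℝ, ε ≤ 1 →
              LinearFormsCondition N ν m₀ t₀ L₀ ε →
              (LinearFormsCondition N (fun x => (ν x + 1) / 2) m₀ t₀ L₀ ε ∧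
                (CorrelationCondition N ν m₀ M →
                  CorrelationCondition N (fun x => (ν x + 1) / 2) m₀ M')) :=
  ⟨halfMomentBound m₀ M, fun _ _ _ _ _ _ _ _ _ _ _ hLF =>
    ⟨hLF.half_add_one, CorrelationCondition.half_add_one⟩⟩
end

section
/- (Gowers–Cauchy–Schwarz inequality.) Let N be a prime and d ≥ 1 an integer. For each ω ∈ {0,1}^d let f_ω : ZMod N → ℝ, and define the Gowers inner product ⟨(f_ω)_{ω ∈ {0,1}^d}⟩_{U^d} := E_{x ∈ ZMod N, h ∈ (ZMod N)^d} ∏_{ω ∈ {0,1}^d} f_ω(x + ω·h), where ω·h := ω_1 h_1 + ⋯ + ω_d h_d. Then: (i) when all f_ω are equal to a single function f, the Gowers inner product is nonnegative, so that ‖f‖_{U^d} := (⟨(f)_{ω}⟩_{U^d})^{1/2^d} is well defined; (ii) in general, |⟨(f_ω)_{ω ∈ {0,1}^d}⟩_{U^d}| ≤ ∏_{ω ∈ {0,1}^d} ‖f_ω‖_{U^d}. -/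
open Finset

section GCS
variable {N : ℕ} [NeZero N] {d : ℕ}

noncomputable def Tsum (N : ℕ) [NeZero N] (d : ℕ) (f : (Fin d → Bool) → ZMod N → ℝ) : ℝ :=
  ∑ x : ZMod N, ∑ h : Fin d → ZMod N,
    ∏ ω : Fin d → Bool, f ω (x + ∑ i : Fin d, if ω i then h i else 0)

noncomputable def Esub (N : ℕ) (d : ℕ) (i : Fin d) (ω : Fin d → Bool)
    (h' : {j : Fin d // j ≠ i} → ZMod N) : ZMod N :=
  ∑ j : {j : Fin d // j ≠ i}, if ω j.1 then h' j else 0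

lemma sum_ite_split (i : Fin d) (ω : Fin d → Bool) (h : Fin d → ZMod N) :
    ∑ j : Fin d, (if ω j then h j else 0) =
      (if ω i then h i else 0) + Esub N d i ω (fun j => h j.1) := by
  rw [← Finset.add_sum_erase _ _ (Finset.mem_univ i)]
  congr 1
  rw [Esub]
  exact Finset.sum_subtype _ (by simp) _

lemma Esub_update (i : Fin d) (ω : Fin d → Bool) (b : Bool)
    (h' : {j : Fin d // j ≠ i} → ZMod N) :
    Esub N d i (Function.update ω i b) h' = Esub N d i ω h' :=
  Finset.sum_congr rfl fun j _ => by rw [Function.update_of_ne j.2]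

lemma Tsum_split (i : Fin d) (f : (Fin d → Bool) → ZMod N → ℝ) :
    Tsum N d f = ∑ h' : {j : Fin d // j ≠ i} → ZMod N,
      (∑ x : ZMod N, ∏ ω ∈ univ.filter (fun ω : Fin d → Bool => ω i = false),
          f ω (x + Esub N d i ω h')) *
      (∑ x : ZMod N, ∏ ω ∈ univ.filter (fun ω : Fin d → Bool => ω i = true),
          f ω (x + Esub N d i ω h')) := by
  calc Tsum N d f
      = ∑ x : ZMod N, ∑ t : ZMod N, ∑ h' : {j : Fin d // j ≠ i} → ZMod N,
          ∏ ω : Fin d → Bool, f ω (x + ((if ω i then t else 0) + Esub N d i ω h')) := by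
        unfold Tsum
        refine Finset.sum_congr rfl fun x _ => ?_
        rw [← Equiv.sum_comp (Equiv.funSplitAt i (ZMod N)).symm
          (fun h : Fin d → ZMod N => ∏ ω : Fin d → Bool,
            f ω (x + ∑ j : Fin d, if ω j then h j else 0))]
        rw [Fintype.sum_prod_type]
        refine Finset.sum_congr rfl fun t _ => ?_
        refine Finset.sum_congr rfl fun h' _ => ?_
        refine Finset.prod_congr rfl fun ω _ => ?_
        congr 1
        rw [sum_ite_split i]
        simp only [Esub, Equiv.funSplitAt_symm_apply, dif_pos, Subtype.coe_eta]
        refine congrArg₂ (· + ·) rfl ?_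
        refine congrArg₂ (· + ·) rfl ?_
        apply Finset.sum_congr rfl
        intro j _
        simp [j.2]
    _ = ∑ x : ZMod N, ∑ t : ZMod N, ∑ h' : {j : Fin d // j ≠ i} → ZMod N,
          (∏ ω ∈ univ.filter (fun ω : Fin d → Bool => ω i = true),
            f ω ((x + t) + Esub N d i ω h')) *
          (∏ ω ∈ univ.filter (fun ω : Fin d → Bool => ω i = false),
            f ω (x + Esub N d i ω h')) := by
        refine Finset.sum_congr rfl fun x _ => Finset.sum_congr rfl fun t _ =>
          Finset.sum_congr rfl fun h' _ => ?_
        rw [← Finset.prod_filter_mul_prod_filter_not univ (fun ω : Fin d → Bool => ω i = true)]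
        congr 1
        · refine Finset.prod_congr rfl fun ω hω => ?_
          rw [Finset.mem_filter] at hω
          rw [hω.2]
          simp [add_assoc]
        · simp only [Bool.not_eq_true]
          refine Finset.prod_congr rfl fun ω hω => ?_
          rw [Finset.mem_filter] at hω
          rw [hω.2]
          simp
    _ = _ := by
        refine Eq.trans (Finset.sum_congr rfl fun x _ => Finset.sum_comm) ?_
        rw [Finset.sum_comm]
        refine Finset.sum_congr rfl fun h' _ => ?_
        have step : ∀ x : ZMod N,
            ∑ t : ZMod N, (∏ ω ∈ univ.filter (fun ω : Fin d → Bool => ω i = true),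
                f ω ((x + t) + Esub N d i ω h')) *
              (∏ ω ∈ univ.filter (fun ω : Fin d → Bool => ω i = false),
                f ω (x + Esub N d i ω h'))
            = (∑ y : ZMod N, ∏ ω ∈ univ.filter (fun ω : Fin d → Bool => ω i = true),
                f ω (y + Esub N d i ω h')) *
              (∏ ω ∈ univ.filter (fun ω : Fin d → Bool => ω i = false),
                f ω (x + Esub N d i ω h')) := by
          intro x
          rw [← Finset.sum_mul]
          congr 1
          exact Equiv.sum_comp (Equiv.addLeft x)
            (fun y => ∏ ω ∈ univ.filter (fun ω : Fin d → Bool => ω i = true),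
              f ω (y + Esub N d i ω h'))
        rw [Finset.sum_congr rfl fun x _ => step x, ← Finset.mul_sum, mul_comm]

lemma prod_flip (i : Fin d) (b c : Bool) (F : (Fin d → Bool) → ℝ) :
    ∏ ω ∈ univ.filter (fun ω : Fin d → Bool => ω i = b), F ω
      = ∏ ω ∈ univ.filter (fun ω : Fin d → Bool => ω i = c), F (Function.update ω i b) := by
  refine Finset.prod_nbij' (fun ω => Function.update ω i c) (fun ω => Function.update ω i b)
    ?_ ?_ ?_ ?_ ?_
  · intro ω hω
    simp [Finset.mem_filter]
  · intro ω hω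
    simp [Finset.mem_filter]
  · intro ω hω
    rw [Finset.mem_filter] at hω
    show Function.update (Function.update ω i c) i b = ω
    rw [Function.update_idem, ← hω.2, Function.update_eq_self]
  · intro ω hω
    rw [Finset.mem_filter] at hω
    show Function.update (Function.update ω i b) i c = ω
    rw [Function.update_idem, ← hω.2, Function.update_eq_self]
  · intro ω hω
    rw [Finset.mem_filter] at hω
    show F ω = F (Function.update (Function.update ω i c) i b)
    rw [Function.update_idem, ← hω.2, Function.update_eq_self]

lemma prod_update (i : Fin d) (b c : Bool) (f : (Fin d → Bool) → ZMod N → ℝ)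
    (x : ZMod N) (h' : {j : Fin d // j ≠ i} → ZMod N) :
    ∏ ω ∈ univ.filter (fun ω : Fin d → Bool => ω i = b),
        f (Function.update ω i c) (x + Esub N d i ω h')
      = ∏ ω ∈ univ.filter (fun ω : Fin d → Bool => ω i = c),
        f ω (x + Esub N d i ω h') := by
  rw [prod_flip i b c (fun ω => f (Function.update ω i c) (x + Esub N d i ω h'))]
  refine Finset.prod_congr rfl fun ω hω => ?_
  rw [Finset.mem_filter] at hω
  rw [Function.update_idem, Esub_update, ← hω.2, Function.update_eq_self]

lemma Tsum_CS (i : Fin d) (f : (Fin d → Bool) → ZMod N → ℝ) :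
    (Tsum N d f) ^ 2 ≤ Tsum N d (fun ω => f (Function.update ω i false)) *
      Tsum N d (fun ω => f (Function.update ω i true)) := by
  rw [Tsum_split i f, Tsum_split i (fun ω => f (Function.update ω i false)),
      Tsum_split i (fun ω => f (Function.update ω i true))]
  have e1 : ∀ h', (∑ x : ZMod N, ∏ ω ∈ univ.filter (fun ω : Fin d → Bool => ω i = false),
      f (Function.update ω i false) (x + Esub N d i ω h'))
      = ∑ x : ZMod N, ∏ ω ∈ univ.filter (fun ω : Fin d → Bool => ω i = false),
        f ω (x + Esub N d i ω h') := fun h' =>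
    Finset.sum_congr rfl fun x _ => prod_update i false false f x h'
  have e2 : ∀ h', (∑ x : ZMod N, ∏ ω ∈ univ.filter (fun ω : Fin d → Bool => ω i = true),
      f (Function.update ω i false) (x + Esub N d i ω h'))
      = ∑ x : ZMod N, ∏ ω ∈ univ.filter (fun ω : Fin d → Bool => ω i = false),
        f ω (x + Esub N d i ω h') := fun h' =>
    Finset.sum_congr rfl fun x _ => prod_update i true false f x h'
  have e3 : ∀ h', (∑ x : ZMod N, ∏ ω ∈ univ.filter (fun ω : Fin d → Bool => ω i = false),
      f (Function.update ω i true) (x + Esub N d i ω h'))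
      = ∑ x : ZMod N, ∏ ω ∈ univ.filter (fun ω : Fin d → Bool => ω i = true),
        f ω (x + Esub N d i ω h') := fun h' =>
    Finset.sum_congr rfl fun x _ => prod_update i false true f x h'
  have e4 : ∀ h', (∑ x : ZMod N, ∏ ω ∈ univ.filter (fun ω : Fin d → Bool => ω i = true),
      f (Function.update ω i true) (x + Esub N d i ω h'))
      = ∑ x : ZMod N, ∏ ω ∈ univ.filter (fun ω : Fin d → Bool => ω i = true),
        f ω (x + Esub N d i ω h') := fun h' =>
    Finset.sum_congr rfl fun x _ => prod_update i true true f x h'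
  simp only [e1, e2, e3, e4]
  simp only [← sq]
  exact Finset.sum_mul_sq_le_sq_mul_sq _ _ _

lemma Tsum_self_nonneg (i : Fin d) (g : ZMod N → ℝ) :
    0 ≤ Tsum N d (fun _ => g) := by
  rw [Tsum_split i (fun _ => g)]
  refine Finset.sum_nonneg fun h' _ => ?_
  have : (∑ x : ZMod N, ∏ ω ∈ univ.filter (fun ω : Fin d → Bool => ω i = true),
      g (x + Esub N d i ω h'))
      = ∑ x : ZMod N, ∏ ω ∈ univ.filter (fun ω : Fin d → Bool => ω i = false),
        g (x + Esub N d i ω h') :=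
    Finset.sum_congr rfl fun x _ => prod_update i true false (fun _ => g) x h'
  rw [this, ← sq]
  exact sq_nonneg _

noncomputable def mix (f : (Fin d → Bool) → ZMod N → ℝ) (T S : Finset (Fin d)) :
    (Fin d → Bool) → ZMod N → ℝ :=
  fun ω => f (fun j => if j ∈ T then decide (j ∈ S) else ω j)

lemma mix_update_false {i : Fin d} {T S : Finset (Fin d)} (hi : i ∉ T) (hS : S ⊆ T)
    (f : (Fin d → Bool) → ZMod N → ℝ) :
    (fun ω => mix f T S (Function.update ω i false)) = mix f (insert i T) S := by
  funext ω
  unfold mix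
  have harg : (fun j => if j ∈ T then decide (j ∈ S) else Function.update ω i false j)
      = (fun j => if j ∈ insert i T then decide (j ∈ S) else ω j) := by
    funext j
    by_cases hj : j = i
    · subst hj
      have hjS : j ∉ S := fun h => hi (hS h)
      simp [hi, hjS]
    · simp [Function.update_of_ne hj, Finset.mem_insert, hj]
  rw [harg]

lemma mix_update_true {i : Fin d} {T S : Finset (Fin d)} (hi : i ∉ T) (hS : S ⊆ T)
    (f : (Fin d → Bool) → ZMod N → ℝ) :
    (fun ω => mix f T S (Function.update ω i true)) = mix f (insert i T) (insert i S) := by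
  funext ω
  unfold mix
  have harg : (fun j => if j ∈ T then decide (j ∈ S) else Function.update ω i true j)
      = (fun j => if j ∈ insert i T then decide (j ∈ insert i S) else ω j) := by
    funext j
    by_cases hj : j = i
    · subst hj
      simp [hi]
    · simp [Function.update_of_ne hj, Finset.mem_insert, hj]
  rw [harg]

lemma Tsum_pow_le (f : (Fin d → Bool) → ZMod N → ℝ) (T : Finset (Fin d)) :
    |Tsum N d f| ^ 2 ^ T.card ≤ ∏ S ∈ T.powerset, |Tsum N d (mix f T S)| := by
  induction T using Finset.induction_on with
  | empty =>
    have hmix : mix (N := N) f ∅ ∅ = f := by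
      funext ω x
      simp [mix]
    simp [hmix]
  | @insert i T hi ih =>
    rw [Finset.card_insert_of_notMem hi, pow_succ, pow_mul]
    calc (|Tsum N d f| ^ 2 ^ T.card) ^ 2
        ≤ (∏ S ∈ T.powerset, |Tsum N d (mix f T S)|) ^ 2 :=
          pow_le_pow_left₀ (pow_nonneg (abs_nonneg _) _) ih 2
      _ = ∏ S ∈ T.powerset, |Tsum N d (mix f T S)| ^ 2 := by rw [← Finset.prod_pow]
      _ ≤ ∏ S ∈ T.powerset, (|Tsum N d (mix f (insert i T) S)| *
            |Tsum N d (mix f (insert i T) (insert i S))|) := by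
          refine Finset.prod_le_prod (fun S _ => sq_nonneg _) (fun S hS => ?_)
          have hST : S ⊆ T := Finset.mem_powerset.mp hS
          have h1 := Tsum_CS (N := N) i (mix f T S)
          rw [mix_update_false hi hST f, mix_update_true hi hST f] at h1
          calc |Tsum N d (mix f T S)| ^ 2 = (Tsum N d (mix f T S)) ^ 2 := sq_abs _
            _ ≤ Tsum N d (mix f (insert i T) S) *
                Tsum N d (mix f (insert i T) (insert i S)) := h1
            _ ≤ |Tsum N d (mix f (insert i T) S) *
                Tsum N d (mix f (insert i T) (insert i S))| := le_abs_self _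
            _ = _ := abs_mul _ _
      _ = ∏ S ∈ (insert i T).powerset, |Tsum N d (mix f (insert i T) S)| := by
          rw [Finset.prod_powerset_insert hi, ← Finset.prod_mul_distrib]

end GCS

/-- The Gowers–Cauchy–Schwarz inequality: (i) the Gowers inner product of a single
function with itself is nonnegative (so the `U^d` norm is well defined), and
(ii) the Gowers inner product of a tuple is bounded by the product of the `U^d`
norms. -/
theorem gowers_cauchy_schwarz (N : ℕ) [NeZero N] (hN : Nat.Prime N)
    (d : ℕ) (hd : 1 ≤ d) (f : (Fin d → Bool) → ZMod N → ℝ) :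
    (∀ g : ZMod N → ℝ, 0 ≤ gowersInner N d (fun _ => g)) ∧
    |gowersInner N d f| ≤ ∏ ω : Fin d → Bool, gowersNorm N d (f ω) := by
  have hNpos : (0:ℝ) < (N : ℝ) := by
    exact_mod_cast Nat.pos_of_ne_zero (NeZero.ne N)
  have hcpos : (0:ℝ) < (N : ℝ) ^ (d + 1) := by positivity
  have hInner : ∀ g : (Fin d → Bool) → ZMod N → ℝ,
      gowersInner N d g = Tsum N d g / (N : ℝ) ^ (d + 1) := fun g => rfl
  have part1 : ∀ g : ZMod N → ℝ, 0 ≤ gowersInner N d (fun _ => g) := by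
    intro g
    rw [hInner]
    exact div_nonneg (Tsum_self_nonneg ⟨0, hd⟩ g) hcpos.le
  refine ⟨part1, ?_⟩
  -- Step 1: the unnormalized inequality
  have hT := Tsum_pow_le f (Finset.univ : Finset (Fin d))
  have hcard : (Finset.univ : Finset (Fin d)).card = d := by simp
  rw [hcard] at hT
  have hmix : ∀ S : Finset (Fin d),
      mix (N := N) f Finset.univ S = fun _ => f (fun j => decide (j ∈ S)) := by
    intro S
    funext ω x
    simp [mix]
  have hbij : Function.Bijective
      (fun S : Finset (Fin d) => (fun j => decide (j ∈ S) : Fin d → Bool)) := by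
    rw [Fintype.bijective_iff_injective_and_card]
    constructor
    · intro S1 S2 h
      ext j
      have := congrFun h j
      simpa using this
    · simp [Fintype.card_finset]
  have hprodeq : (∏ S ∈ (Finset.univ : Finset (Fin d)).powerset,
        |Tsum N d (mix f Finset.univ S)|)
      = ∏ ω : Fin d → Bool, |Tsum N d (fun _ => f ω)| := by
    rw [Finset.powerset_univ]
    exact Fintype.prod_bijective _ hbij _ _ (fun S => by rw [hmix S])
  rw [hprodeq] at hT
  have habs : ∀ ω : Fin d → Bool, |Tsum N d (fun _ => f ω)| = Tsum N d (fun _ => f ω) :=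
    fun ω => abs_of_nonneg (Tsum_self_nonneg ⟨0, hd⟩ (f ω))
  simp only [habs] at hT
  -- Step 2: normalize
  have hcard2 : Fintype.card (Fin d → Bool) = 2 ^ d := by simp
  have key2 : |gowersInner N d f| ^ (2 ^ d : ℕ) ≤
      ∏ ω : Fin d → Bool, gowersInner N d (fun _ => f ω) := by
    simp only [hInner]
    rw [abs_div, abs_of_pos hcpos, div_pow, Finset.prod_div_distrib,
      Finset.prod_const, Finset.card_univ, hcard2]
    rw [div_le_div_iff_of_pos_right (by positivity)]
    exact hT
  -- Step 3: take 2^d-th roots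
  have h1 : |gowersInner N d f| =
      (|gowersInner N d f| ^ (2 ^ d : ℕ)) ^ ((1 : ℝ) / 2 ^ d) := by
    rw [← Real.rpow_natCast |gowersInner N d f| (2 ^ d), ← Real.rpow_mul (abs_nonneg _)]
    push_cast
    rw [mul_one_div_cancel (by positivity : ((2:ℝ) ^ d) ≠ 0), Real.rpow_one]
  rw [h1]
  calc (|gowersInner N d f| ^ (2 ^ d : ℕ)) ^ ((1 : ℝ) / 2 ^ d)
      ≤ (∏ ω : Fin d → Bool, gowersInner N d (fun _ => f ω)) ^ ((1 : ℝ) / 2 ^ d) :=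
        Real.rpow_le_rpow (by positivity) key2 (by positivity)
    _ = ∏ ω : Fin d → Bool, (gowersInner N d (fun _ => f ω)) ^ ((1 : ℝ) / 2 ^ d) :=
        (Real.finset_prod_rpow _ _ (fun ω _ => part1 (f ω)) _).symm
    _ = ∏ ω : Fin d → Bool, gowersNorm N d (f ω) := rfl
end

section
/- (Pseudorandom measures are close to 1 in Gowers norm.) For every integer k ≥ 3 and every ε' > 0 there exist ε > 0 and N₀ such that: for every prime N ≥ N₀ and every ν : ZMod N → ℝ with ν ≥ 0 satisfying the (2^{k−1}, k, 1)-linear forms condition with error ε, one has ‖ν − 1‖_{U^d} ≤ ε' for every integer 1 ≤ d ≤ k−1. -/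
open Finset

/-!
Expanding `∏_ω (ν(x + ω·h) - 1)` over the subsets `S` of the cube `{0,1}^d` writes the Gowers inner
product of `ν - 1` as a signed sum of the averages of `∏_{ω ∈ S} ν(x + ω·h)`. Each of these is an
average of `ν` over the system of `|S| ≤ 2^d` pairwise independent forms `x + ω·h` in `d + 1`
variables, so the linear forms condition puts it within `ε` of `1`; since the signs sum to zero,
`‖ν - 1‖_{U^d}^{2^d} ≤ 2^{2^d} ε`.
-/

theorem abs_sum_powerset_neg_one_pow_mul_le {ι : Type*} [DecidableEq ι] {s : Finset ι}
    (hs : s.Nonempty) (A : Finset ι → ℝ) {ε : ℝ} (hA : ∀ u ⊆ s, |A u - 1| ≤ ε) :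
    |∑ t ∈ s.powerset, (-1 : ℝ) ^ #t * A (s \ t)| ≤ 2 ^ #s * ε := by
  have hsigns : ∑ t ∈ s.powerset, (-1 : ℝ) ^ #t = 0 := by
    exact_mod_cast sum_powerset_neg_one_pow_card_of_nonempty hs
  have hcentre : ∑ t ∈ s.powerset, (-1 : ℝ) ^ #t * A (s \ t)
      = ∑ t ∈ s.powerset, (-1 : ℝ) ^ #t * (A (s \ t) - 1) := by
    simp only [mul_sub, mul_one, sum_sub_distrib, hsigns, sub_zero]
  calc |∑ t ∈ s.powerset, (-1 : ℝ) ^ #t * A (s \ t)|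
      ≤ ∑ t ∈ s.powerset, |(-1 : ℝ) ^ #t * (A (s \ t) - 1)| := hcentre ▸ abs_sum_le_sum_abs _ _
    _ ≤ ∑ _t ∈ s.powerset, ε := sum_le_sum fun t _ => by
        simpa [abs_mul] using hA _ sdiff_subset
    _ = 2 ^ #s * ε := by rw [sum_const, card_powerset, nsmul_eq_mul, Nat.cast_pow, Nat.cast_ofNat]

variable {N d : ℕ}

noncomputable def cubeAverage (N : ℕ) [NeZero N] (d : ℕ) (ν : ZMod N → ℝ)
    (S : Finset (Fin d → Bool)) : ℝ :=
  (∑ x : ZMod N, ∑ h : Fin d → ZMod N,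
    ∏ ω ∈ S, ν (x + ∑ i : Fin d, if ω i then h i else 0)) / (N : ℝ) ^ (d + 1)

theorem gowersInner_sub_one_eq [NeZero N] (ν : ZMod N → ℝ) :
    gowersInner N d (fun _ x => ν x - 1)
      = ∑ t ∈ (univ : Finset (Fin d → Bool)).powerset,
          (-1 : ℝ) ^ #t * cubeAverage N d ν (univ \ t) := by
  classical
  simp only [gowersInner, cubeAverage, prod_sub, prod_const_one, mul_div_assoc', ← sum_div]
  congr 1
  simp only [mul_one, mul_sum]
  exact (sum_congr rfl fun _ _ => sum_comm).trans sum_comm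

theorem cubeAverage_empty [NeZero N] (ν : ZMod N → ℝ) : cubeAverage N d ν ∅ = 1 := by
  have hN : (N : ℝ) ^ (d + 1) ≠ 0 := pow_ne_zero _ (Nat.cast_ne_zero.mpr (NeZero.ne N))
  rw [cubeAverage]
  simp [ZMod.card, ← pow_succ', hN]

/-- The coefficients of the form `(x, h) ↦ x + ω·h` on `(ZMod N)^(d+1)`. -/
def cubeCoeffs (ω : Fin d → Bool) : Fin (d + 1) → ℚ :=
  Fin.cons 1 fun i => if ω i then 1 else 0

theorem cubeCoeffs_ne_zero (ω : Fin d → Bool) : cubeCoeffs ω ≠ 0 := fun h => by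
  simpa [cubeCoeffs] using congrFun h 0

theorem cubeCoeffs_bound (ω : Fin d → Bool) (j : Fin (d + 1)) :
    (cubeCoeffs ω j).num.natAbs ≤ 1 ∧ (cubeCoeffs ω j).den ≤ 1 := by
  cases j using Fin.cases with
  | zero => simp [cubeCoeffs]
  | succ i => by_cases hω : ω i <;> simp [cubeCoeffs, hω]

theorem eq_of_cubeCoeffs_eq_smul {ω ω' : Fin d → Bool} {q : ℚ}
    (h : cubeCoeffs ω = q • cubeCoeffs ω') : ω = ω' := by
  have hq : q = 1 := by simpa [cubeCoeffs] using (congrFun h 0).symm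
  subst hq
  funext i
  have hi := congrFun h i.succ
  simp only [cubeCoeffs, one_smul, Fin.cons_succ] at hi
  revert hi
  cases ω i <;> cases ω' i <;> simp

theorem sum_cubeCoeffs_mul_cons [Fact N.Prime] (ω : Fin d → Bool) (x : ZMod N)
    (h : Fin d → ZMod N) :
    ∑ j, (cubeCoeffs ω j : ZMod N) * (Fin.cons x h : Fin (d + 1) → ZMod N) j
      = x + ∑ i, if ω i then h i else 0 := by
  rw [Fin.sum_univ_succ]
  congr 1
  · simp [cubeCoeffs]
  · refine sum_congr rfl fun i _ => ?_
    by_cases hω : ω i <;> simp [cubeCoeffs, hω]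

theorem cubeAverage_eq_avg_cubeCoeffs [Fact N.Prime] (ν : ZMod N → ℝ) {S : Finset (Fin d → Bool)}
    (e : S ≃ Fin #S) :
    cubeAverage N d ν S = (∑ y : Fin (d + 1) → ZMod N, ∏ i : Fin #S,
      ν (∑ j, (cubeCoeffs (e.symm i : Fin d → Bool) j : ZMod N) * y j + 0)) /
      (N : ℝ) ^ (d + 1) := by
  rw [cubeAverage, ← (Fin.consEquiv fun _ => ZMod N).sum_comp, Fintype.sum_prod_type]
  congr 1
  refine sum_congr rfl fun x _ => sum_congr rfl fun h _ => ?_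
  rw [← prod_coe_sort S, ← e.symm.prod_comp]
  simp [Fin.consEquiv_apply, sum_cubeCoeffs_mul_cons]

theorem abs_cubeAverage_sub_one_le [Fact N.Prime] {ν : ZMod N → ℝ} {m₀ t₀ L₀ : ℕ} {ε : ℝ}
    (hν : LinearFormsCondition N ν m₀ t₀ L₀ ε) (hm₀ : 2 ^ d ≤ m₀) (ht₀ : d + 1 ≤ t₀) (hL₀ : 1 ≤ L₀)
    {S : Finset (Fin d → Bool)} (hS : S.Nonempty) :
    |cubeAverage N d ν S - 1| ≤ ε := by
  have hcard : #S ≤ m₀ := calc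
    #S ≤ Fintype.card (Fin d → Bool) := card_le_univ S
    _ = 2 ^ d := by simp
    _ ≤ m₀ := hm₀
  rw [cubeAverage_eq_avg_cubeCoeffs ν S.equivFin]
  refine hν #S (d + 1) hS.card_pos hcard (Nat.succ_pos d) ht₀ _ 0
    (fun i j => (cubeCoeffs_bound _ j).imp (·.trans hL₀) (·.trans hL₀))
    (fun i => cubeCoeffs_ne_zero _) ?_
  rintro i i' hii' ⟨q, hq⟩
  exact hii' (S.equivFin.symm.injective (Subtype.ext (eq_of_cubeCoeffs_eq_smul hq)))

theorem abs_gowersInner_sub_one_le [Fact N.Prime] {ν : ZMod N → ℝ} {m₀ t₀ L₀ : ℕ} {ε : ℝ}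
    (hν : LinearFormsCondition N ν m₀ t₀ L₀ ε) (hm₀ : 2 ^ d ≤ m₀) (ht₀ : d + 1 ≤ t₀)
    (hL₀ : 1 ≤ L₀) :
    |gowersInner N d (fun _ x => ν x - 1)| ≤ 2 ^ 2 ^ d * ε := by
  have hcube {S : Finset (Fin d → Bool)} (hS : S.Nonempty) : |cubeAverage N d ν S - 1| ≤ ε :=
    abs_cubeAverage_sub_one_le hν hm₀ ht₀ hL₀ hS
  have hε : 0 ≤ ε := (abs_nonneg _).trans (hcube univ_nonempty)
  have hall (S : Finset (Fin d → Bool)) (_ : S ⊆ univ) : |cubeAverage N d ν S - 1| ≤ ε := by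
    rcases S.eq_empty_or_nonempty with rfl | hS
    · simpa [cubeAverage_empty] using hε
    · exact hcube hS
  rw [gowersInner_sub_one_eq]
  simpa using abs_sum_powerset_neg_one_pow_mul_le univ_nonempty (cubeAverage N d ν) hall

theorem gowersNorm_le_of_abs_gowersInner_le [NeZero N] {f : ZMod N → ℝ} {c : ℝ} (hc : 0 ≤ c)
    (h : |gowersInner N d (fun _ => f)| ≤ c ^ 2 ^ d) : gowersNorm N d f ≤ c := by
  have hexp : (1 : ℝ) / 2 ^ d = ((2 ^ d : ℕ) : ℝ)⁻¹ := by push_cast; rw [one_div]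
  calc gowersNorm N d f
      ≤ |gowersInner N d (fun _ => f)| ^ ((1 : ℝ) / 2 ^ d) :=
        (le_abs_self _).trans (Real.abs_rpow_le_abs_rpow _ _)
    _ ≤ (c ^ 2 ^ d) ^ ((1 : ℝ) / 2 ^ d) := by gcongr
    _ = c := by rw [hexp, Real.pow_rpow_inv_natCast hc (by positivity)]

theorem pseudorandom_close_to_one_in_gowers_norm_general (k : ℕ)
    (ε' : ℝ) (hε' : 0 < ε') :
    ∃ ε : ℝ, 0 < ε ∧ ∃ N₀ : ℕ,
      ∀ (N : ℕ) [Fact (Nat.Prime N)], N₀ ≤ N →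
        ∀ ν : ZMod N → ℝ, (∀ x, 0 ≤ ν x) →
          LinearFormsCondition N ν (2 ^ (k - 1)) k 1 ε →
          ∀ d : ℕ, 1 ≤ d → d ≤ k - 1 →
            gowersNorm N d (fun x => ν x - 1) ≤ ε' := by
  set δ := min (ε' / 2) 1
  have hδ : 0 < δ := lt_min (half_pos hε') one_pos
  refine ⟨δ ^ 2 ^ (k - 1), by positivity, 0, fun N _ _ ν _ hν d hd hdk => ?_⟩
  refine gowersNorm_le_of_abs_gowersInner_le hε'.le ?_
  have hpow : 2 ^ d ≤ 2 ^ (k - 1) := Nat.pow_le_pow_right two_pos hdk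
  calc |gowersInner N d (fun _ x => ν x - 1)|
      ≤ 2 ^ 2 ^ d * δ ^ 2 ^ (k - 1) := abs_gowersInner_sub_one_le hν hpow (by omega) le_rfl
    _ ≤ 2 ^ 2 ^ d * δ ^ 2 ^ d := by
        gcongr 2 ^ 2 ^ d * ?_
        exact pow_le_pow_of_le_one hδ.le (min_le_right _ _) hpow
    _ = (2 * δ) ^ 2 ^ d := (mul_pow _ _ _).symm
    _ ≤ ε' ^ 2 ^ d := by
        gcongr
        linarith [min_le_left (ε' / 2) 1]

/-- A pseudorandom measure is close to the constant `1` in every `U^d` norm,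
`1 ≤ d ≤ k - 1`. -/
theorem pseudorandom_close_to_one_in_gowers_norm (k : ℕ) (hk : 3 ≤ k)
    (ε' : ℝ) (hε' : 0 < ε') :
    ∃ ε : ℝ, 0 < ε ∧ ∃ N₀ : ℕ,
      ∀ (N : ℕ) [Fact (Nat.Prime N)], N₀ ≤ N →
        ∀ ν : ZMod N → ℝ, (∀ x, 0 ≤ ν x) →
          LinearFormsCondition N ν (2 ^ (k - 1)) k 1 ε →
          ∀ d : ℕ, 1 ≤ d → d ≤ k - 1 →
            gowersNorm N d (fun x => ν x - 1) ≤ ε' :=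
  pseudorandom_close_to_one_in_gowers_norm_general k ε' hε'
end

section
/- (Weighted Cauchy–Schwarz iteration.) Let N be prime, k ≥ 2, and let ν : ZMod N → ℝ with ν ≥ 0. Let φ_0,…,φ_{k−1} : (ZMod N)^{k−1} → ZMod N be functions such that for each 1 ≤ i ≤ k−1 the value φ_i(y) does not depend on the i-th coordinate y_i. Let f_0,…,f_{k−1} : ZMod N → ℝ satisfy |f_i(x)| ≤ ν(x) for all x and all i. For 0 ≤ d ≤ k−1, for y ∈ (ZMod N)^{k−1}, y' = (y'_{k−d},…,y'_{k−1}) ∈ (ZMod N)^d, and S ⊆ {k−d,…,k−1}, let y^{(S)} ∈ (ZMod N)^{k−1} be the vector whose i-th coordinate is y'_i if i ∈ S and y_i otherwise. Define J_d := E_{y ∈ (ZMod N)^{k−1}, y' ∈ (ZMod N)^d} ∏_{S ⊆ {k−d,…,k−1}} [ (∏_{i=0}^{k−d−1} f_i(φ_i(y^{(S)}))) · (∏_{i=k−d}^{k−1} √(ν(φ_i(y^{(S)})))) ] and P_d := E_{y ∈ (ZMod N)^{k−1}, y' ∈ (ZMod N)^d} ∏_{S ⊆ {k−d,…,k−1}}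 ν(φ_{k−d−1}(y^{(S)})). Then for every 0 ≤ d ≤ k−2 one has J_d² ≤ P_d · J_{d+1}. -/
open Finset

/-- The modified vector `y^{(S)}`: coordinate `i` is taken from `y'` when `i ∈ S`
and from `y` otherwise. -/
def modVec {N K : ℕ} (y y' : Fin K → ZMod N) (S : Finset (Fin K)) : Fin K → ZMod N :=
  fun i => if i ∈ S then y' i else y i

/-- The quantity `J_d` of the weighted Cauchy–Schwarz iteration (with `k = K + 1`).
Here `S` ranges over subsets of the last `d` coordinate indices `{K-d, …, K-1}`,
and the average over the auxiliary variables `y'` ranges (equivalently) over all of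
`(ZMod N)^K`, the coordinates outside the last `d` being immaterial. -/
noncomputable def Jquant (N : ℕ) [NeZero N] (K : ℕ) (ν : ZMod N → ℝ)
    (φ : Fin (K + 1) → (Fin K → ZMod N) → ZMod N)
    (f : Fin (K + 1) → ZMod N → ℝ) (d : ℕ) : ℝ :=
  (∑ y : Fin K → ZMod N, ∑ y' : Fin K → ZMod N,
    ∏ S ∈ (Finset.univ.filter (fun i : Fin K => K - d ≤ i.val)).powerset,
      (∏ i ∈ Finset.univ.filter (fun i : Fin (K + 1) => i.val ≤ K - d),
          f i (φ i (modVec y y' S))) *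
        ∏ i ∈ Finset.univ.filter (fun i : Fin (K + 1) => K - d < i.val),
          Real.sqrt (ν (φ i (modVec y y' S)))) / (N : ℝ) ^ (2 * K)

/-- The quantity `P_d` of the weighted Cauchy–Schwarz iteration. -/
noncomputable def Pquant (N : ℕ) [NeZero N] (K : ℕ) (ν : ZMod N → ℝ)
    (φ : Fin (K + 1) → (Fin K → ZMod N) → ZMod N) (d : ℕ) : ℝ :=
  (∑ y : Fin K → ZMod N, ∑ y' : Fin K → ZMod N,
    ∏ S ∈ (Finset.univ.filter (fun i : Fin K => K - d ≤ i.val)).powerset,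
      ν (φ ⟨K - d, Nat.lt_succ_of_le (Nat.sub_le K d)⟩ (modVec y y' S))) / (N : ℝ) ^ (2 * K)

private lemma sum_update_bij {N K : ℕ} [NeZero N] (m : Fin K)
    (g : (Fin K → ZMod N) → ZMod N → ℝ) :
    ∑ y : Fin K → ZMod N, ∑ t : ZMod N, g (Function.update y m t) (y m)
      = ∑ y : Fin K → ZMod N, ∑ t : ZMod N, g y t := by
  rw [← Fintype.sum_prod_type', ← Fintype.sum_prod_type']
  exact Fintype.sum_equiv
    ⟨fun p => (Function.update p.1 m p.2, p.1 m),
     fun p => (Function.update p.1 m p.2, p.1 m),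
     fun p => by simp [Function.update_idem],
     fun p => by simp [Function.update_idem]⟩
    _ _ (fun p => rfl)

private lemma modVec_update_left {N K : ℕ} (y y' : Fin K → ZMod N) (m : Fin K) (t : ZMod N)
    (S : Finset (Fin K)) (hm : m ∉ S) :
    modVec (Function.update y m t) y' S = Function.update (modVec y y' S) m t := by
  funext i
  by_cases h : i = m
  · subst h; simp [modVec, hm]
  · simp [modVec, Function.update_of_ne h]

private lemma modVec_update_right {N K : ℕ} (y y' : Fin K → ZMod N) (m : Fin K) (t : ZMod N)
    (S : Finset (Fin K)) (hm : m ∉ S) :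
    modVec y (Function.update y' m t) S = modVec y y' S := by
  funext i
  by_cases h : i = m
  · subst h; simp [modVec, hm]
  · simp [modVec, Function.update_of_ne h]

private lemma modVec_insert {N K : ℕ} (y y' : Fin K → ZMod N) (m : Fin K)
    (S : Finset (Fin K)) :
    modVec y y' (insert m S) = modVec (Function.update y m (y' m)) y' S := by
  funext i
  by_cases h : i = m
  · subst h; by_cases hS : i ∈ S <;> simp [modVec, hS]
  · simp [modVec, h, Function.update_of_ne h]

private lemma sum_const_zmod {N : ℕ} [NeZero N] (c : ℝ) :
    ∑ _t : ZMod N, c = (N : ℝ) * c := by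
  rw [Finset.sum_const, Finset.card_univ, ZMod.card, nsmul_eq_mul]


set_option maxHeartbeats 2000000 in
/-- Weighted Cauchy–Schwarz iteration: `J_d² ≤ P_d · J_{d+1}` for `0 ≤ d ≤ k - 2`,
stated with `k = K + 1 ≥ 2`. -/
theorem weighted_cauchy_schwarz (N : ℕ) [NeZero N] (hN : Nat.Prime N)
    (K : ℕ) (hK : 1 ≤ K) (ν : ZMod N → ℝ) (hν : ∀ x, 0 ≤ ν x)
    (φ : Fin (K + 1) → (Fin K → ZMod N) → ZMod N)
    (hφ : ∀ i : Fin K, ∀ y y' : Fin K → ZMod N,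
      (∀ j, j ≠ i → y j = y' j) → φ i.succ y = φ i.succ y')
    (f : Fin (K + 1) → ZMod N → ℝ) (hf : ∀ i x, |f i x| ≤ ν x) :
    ∀ d : ℕ, d + 1 ≤ K →
      (Jquant N K ν φ f d) ^ 2 ≤ Pquant N K ν φ d * Jquant N K ν φ f (d + 1) := by
  intro d hd
  have hN0 : (0 : ℝ) < (N : ℝ) := by
    exact_mod_cast Nat.pos_of_ne_zero (NeZero.ne N)
  have hmK : K - d - 1 < K := by omega
  set m : Fin K := ⟨K - d - 1, hmK⟩ with hm_def
  have hmval : (m : ℕ) = K - d - 1 := rfl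
  have hmsucc : ((m.succ : Fin (K + 1)) : ℕ) = K - d := by
    simp only [Fin.val_succ, hmval]; omega
  have hidx : (⟨K - d, Nat.lt_succ_of_le (Nat.sub_le K d)⟩ : Fin (K + 1)) = m.succ :=
    Fin.ext (by rw [hmsucc])
  -- independence of φ m.succ on coordinate m
  have hφm : ∀ (z : Fin K → ZMod N) (t : ZMod N),
      φ m.succ (Function.update z m t) = φ m.succ z := by
    intro z t
    exact (hφ m z (Function.update z m t)
      (fun j hj => (Function.update_of_ne hj _ _).symm)).symm
  set T : Finset (Fin K) := Finset.univ.filter (fun i : Fin K => K - d ≤ i.val) with hT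
  have hmT : m ∉ T := by
    simp only [hT, mem_filter, mem_univ, true_and, hmval]
    omega
  have hmS : ∀ S ∈ T.powerset, m ∉ S := fun S hS h => hmT (Finset.mem_powerset.mp hS h)
  -- main players
  set W : (Fin K → ZMod N) → (Fin K → ZMod N) → ℝ :=
    fun y y' => ∏ S ∈ T.powerset, ν (φ m.succ (modVec y y' S)) with hW
  set A : (Fin K → ZMod N) → (Fin K → ZMod N) → ℝ :=
    fun y y' => ∏ S ∈ T.powerset, f m.succ (φ m.succ (modVec y y' S)) with hA
  set B : (Fin K → ZMod N) → (Fin K → ZMod N) → ℝ :=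
    fun y y' => ∏ S ∈ T.powerset,
      (∏ i ∈ Finset.univ.filter (fun i : Fin (K + 1) => i.val ≤ K - (d + 1)),
          f i (φ i (modVec y y' S))) *
        ∏ i ∈ Finset.univ.filter (fun i : Fin (K + 1) => K - d < i.val),
          Real.sqrt (ν (φ i (modVec y y' S))) with hB
  set G : (Fin K → ZMod N) → (Fin K → ZMod N) → ℝ :=
    fun y y' => ∑ t : ZMod N, B (Function.update y m t) y' with hG
  -- independence facts
  have hWleft : ∀ y y' t, W (Function.update y m t) y' = W y y' := by
    intro y y' t
    refine Finset.prod_congr rfl fun S hS => ?_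
    rw [modVec_update_left _ _ _ _ _ (hmS S hS), hφm]
  have hAleft : ∀ y y' t, A (Function.update y m t) y' = A y y' := by
    intro y y' t
    refine Finset.prod_congr rfl fun S hS => ?_
    rw [modVec_update_left _ _ _ _ _ (hmS S hS), hφm]
  have hWright : ∀ y y' t, W y (Function.update y' m t) = W y y' := by
    intro y y' t
    refine Finset.prod_congr rfl fun S hS => ?_
    rw [modVec_update_right _ _ _ _ _ (hmS S hS)]
  have hBright : ∀ y y' t, B y (Function.update y' m t) = B y y' := by
    intro y y' t
    refine Finset.prod_congr rfl fun S hS => ?_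
    rw [modVec_update_right _ _ _ _ _ (hmS S hS)]
  have hWnn : ∀ y y', 0 ≤ W y y' :=
    fun y y' => Finset.prod_nonneg fun S _ => hν _
  have hAbs : ∀ y y', |A y y'| ≤ W y y' := by
    intro y y'
    rw [hA, hW]
    calc |∏ S ∈ T.powerset, f m.succ (φ m.succ (modVec y y' S))|
        = ∏ S ∈ T.powerset, |f m.succ (φ m.succ (modVec y y' S))| := Finset.abs_prod _ _
      _ ≤ _ := Finset.prod_le_prod (fun _ _ => abs_nonneg _) (fun S _ => hf _ _)
  -- filter splittings
  have hsplitf : Finset.univ.filter (fun i : Fin (K + 1) => i.val ≤ K - d)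
      = insert m.succ (Finset.univ.filter (fun i : Fin (K + 1) => i.val ≤ K - (d + 1))) := by
    ext i
    simp only [mem_filter, mem_univ, true_and, mem_insert, Fin.ext_iff, hmsucc]
    omega
  have hmsuccf : m.succ ∉ Finset.univ.filter (fun i : Fin (K + 1) => i.val ≤ K - (d + 1)) := by
    simp only [mem_filter, mem_univ, true_and, hmsucc]
    omega
  have hsplitg : Finset.univ.filter (fun i : Fin (K + 1) => K - (d + 1) < i.val)
      = insert m.succ (Finset.univ.filter (fun i : Fin (K + 1) => K - d < i.val)) := by
    ext i
    simp only [mem_filter, mem_univ, true_and, mem_insert, Fin.ext_iff, hmsucc]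
    omega
  have hmsuccg : m.succ ∉ Finset.univ.filter (fun i : Fin (K + 1) => K - d < i.val) := by
    simp only [mem_filter, mem_univ, true_and, hmsucc]
    omega
  have hTsplit : Finset.univ.filter (fun i : Fin K => K - (d + 1) ≤ i.val) = insert m T := by
    ext i
    simp only [hT, mem_filter, mem_univ, true_and, mem_insert, Fin.ext_iff, hmval]
    omega
  -- the numerators
  set sd : ℝ := ∑ y : Fin K → ZMod N, ∑ y' : Fin K → ZMod N,
    ∏ S ∈ (Finset.univ.filter (fun i : Fin K => K - d ≤ i.val)).powerset,
      (∏ i ∈ Finset.univ.filter (fun i : Fin (K + 1) => i.val ≤ K - d),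
          f i (φ i (modVec y y' S))) *
        ∏ i ∈ Finset.univ.filter (fun i : Fin (K + 1) => K - d < i.val),
          Real.sqrt (ν (φ i (modVec y y' S))) with hsd
  set sd1 : ℝ := ∑ y : Fin K → ZMod N, ∑ y' : Fin K → ZMod N,
    ∏ S ∈ (Finset.univ.filter (fun i : Fin K => K - (d + 1) ≤ i.val)).powerset,
      (∏ i ∈ Finset.univ.filter (fun i : Fin (K + 1) => i.val ≤ K - (d + 1)),
          f i (φ i (modVec y y' S))) *
        ∏ i ∈ Finset.univ.filter (fun i : Fin (K + 1) => K - (d + 1) < i.val),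
          Real.sqrt (ν (φ i (modVec y y' S))) with hsd1
  set sP : ℝ := ∑ y : Fin K → ZMod N, ∑ y' : Fin K → ZMod N,
    ∏ S ∈ (Finset.univ.filter (fun i : Fin K => K - d ≤ i.val)).powerset,
      ν (φ ⟨K - d, Nat.lt_succ_of_le (Nat.sub_le K d)⟩ (modVec y y' S)) with hsP
  have hJd : Jquant N K ν φ f d = sd / (N : ℝ) ^ (2 * K) := rfl
  have hJd1 : Jquant N K ν φ f (d + 1) = sd1 / (N : ℝ) ^ (2 * K) := rfl
  have hPd : Pquant N K ν φ d = sP / (N : ℝ) ^ (2 * K) := rfl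
  -- structural identities
  have hGdef : ∀ y y' : Fin K → ZMod N,
      G y y' = ∑ t : ZMod N, B (Function.update y m t) y' := fun _ _ => rfl
  have hGleft : ∀ y y' t, G (Function.update y m t) y' = G y y' := by
    intro y y' t
    rw [hGdef, hGdef]
    exact Finset.sum_congr rfl fun s _ => by rw [Function.update_idem]
  have hF1 : sd = ∑ y : Fin K → ZMod N, ∑ y' : Fin K → ZMod N, A y y' * B y y' := by
    rw [hsd, ← hT]
    refine Finset.sum_congr rfl fun y _ => Finset.sum_congr rfl fun y' _ => ?_
    simp only [hA, hB]
    rw [← Finset.prod_mul_distrib]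
    refine Finset.prod_congr rfl fun S hS => ?_
    rw [hsplitf, Finset.prod_insert hmsuccf]
    ring
  have hF5 : sd1 = ∑ y : Fin K → ZMod N, ∑ y' : Fin K → ZMod N,
      W y y' * (B y y' * B (Function.update y m (y' m)) y') := by
    rw [hsd1, hTsplit]
    refine Finset.sum_congr rfl fun y _ => Finset.sum_congr rfl fun y' _ => ?_
    rw [Finset.prod_powerset_insert hmT]
    simp only [hW, hB]
    rw [← Finset.prod_mul_distrib, ← Finset.prod_mul_distrib, ← Finset.prod_mul_distrib]
    refine Finset.prod_congr rfl fun S hS => ?_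
    have hmnotS := hmS S hS
    rw [modVec_insert y y' m S]
    have hφeq : φ m.succ (modVec (Function.update y m (y' m)) y' S)
        = φ m.succ (modVec y y' S) := by
      rw [modVec_update_left _ _ _ _ _ hmnotS, hφm]
    rw [hsplitg, Finset.prod_insert hmsuccg, Finset.prod_insert hmsuccg, hφeq]
    conv_rhs => rw [← Real.mul_self_sqrt (hν (φ m.succ (modVec y y' S)))]
    ring
  have hE2 : sP = ∑ y : Fin K → ZMod N, ∑ y' : Fin K → ZMod N, W y y' := by
    rw [hsP, ← hT]
    refine Finset.sum_congr rfl fun y _ => Finset.sum_congr rfl fun y' _ => ?_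
    simp only [hW, hidx]
  have hE1 : ∑ y : Fin K → ZMod N, ∑ y' : Fin K → ZMod N, A y y' * G y y'
      = (N : ℝ) * sd := by
    have key : ∀ y' : Fin K → ZMod N, ∑ y : Fin K → ZMod N, A y y' * G y y'
        = (N : ℝ) * ∑ y : Fin K → ZMod N, A y y' * B y y' := by
      intro y'
      calc ∑ y : Fin K → ZMod N, A y y' * G y y'
          = ∑ y : Fin K → ZMod N, ∑ t : ZMod N,
              A (Function.update y m t) y' * B (Function.update y m t) y' := by
            refine Finset.sum_congr rfl fun y _ => ?_
            rw [hGdef, Finset.mul_sum]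
            exact Finset.sum_congr rfl fun t _ => by rw [hAleft]
        _ = ∑ y : Fin K → ZMod N, ∑ _t : ZMod N, A y y' * B y y' :=
            sum_update_bij m (fun z _ => A z y' * B z y')
        _ = (N : ℝ) * ∑ y : Fin K → ZMod N, A y y' * B y y' := by
            rw [Finset.sum_congr rfl (fun y _ => sum_const_zmod _), ← Finset.mul_sum]
    calc ∑ y : Fin K → ZMod N, ∑ y' : Fin K → ZMod N, A y y' * G y y'
        = ∑ y' : Fin K → ZMod N, ∑ y : Fin K → ZMod N, A y y' * G y y' := Finset.sum_comm
      _ = ∑ y' : Fin K → ZMod N, (N : ℝ) * ∑ y : Fin K → ZMod N, A y y' * B y y' :=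
          Finset.sum_congr rfl fun y' _ => key y'
      _ = (N : ℝ) * ∑ y' : Fin K → ZMod N, ∑ y : Fin K → ZMod N, A y y' * B y y' := by
          rw [← Finset.mul_sum]
      _ = (N : ℝ) * sd := by
          congr 1
          rw [Finset.sum_comm]
          exact hF1.symm
  have hE3 : ∑ y : Fin K → ZMod N, ∑ y' : Fin K → ZMod N, W y y' * (G y y') ^ 2
      = (N : ℝ) ^ 2 * sd1 := by
    have step2 : ∀ y' : Fin K → ZMod N, ∑ y : Fin K → ZMod N, W y y' * (G y y') ^ 2
        = (N : ℝ) * ∑ y : Fin K → ZMod N, W y y' * B y y' * G y y' := by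
      intro y'
      have e1 : ∀ y : Fin K → ZMod N, W y y' * (G y y') ^ 2
          = ∑ t : ZMod N, W (Function.update y m t) y' * B (Function.update y m t) y'
              * G (Function.update y m t) y' := by
        intro y
        calc W y y' * (G y y') ^ 2
            = W y y' * G y y' * ∑ t : ZMod N, B (Function.update y m t) y' := by
              rw [← hGdef]; ring
          _ = ∑ t : ZMod N, W y y' * G y y' * B (Function.update y m t) y' := by
              rw [Finset.mul_sum]
          _ = _ := Finset.sum_congr rfl fun t _ => by rw [hWleft, hGleft]; ring
      calc ∑ y : Fin K → ZMod N, W y y' * (G y y') ^ 2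
          = ∑ y : Fin K → ZMod N, ∑ t : ZMod N, W (Function.update y m t) y'
              * B (Function.update y m t) y' * G (Function.update y m t) y' :=
            Finset.sum_congr rfl fun y _ => e1 y
        _ = ∑ y : Fin K → ZMod N, ∑ _t : ZMod N, W y y' * B y y' * G y y' :=
            sum_update_bij m (fun z _ => W z y' * B z y' * G z y')
        _ = (N : ℝ) * ∑ y : Fin K → ZMod N, W y y' * B y y' * G y y' := by
            rw [Finset.sum_congr rfl (fun y _ => sum_const_zmod _), ← Finset.mul_sum]
    have step3 : ∀ y : Fin K → ZMod N, ∑ y' : Fin K → ZMod N, W y y' * B y y' * G y y'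
        = (N : ℝ) * ∑ y' : Fin K → ZMod N,
            W y y' * (B y y' * B (Function.update y m (y' m)) y') := by
      intro y
      calc ∑ y' : Fin K → ZMod N, W y y' * B y y' * G y y'
          = ∑ y' : Fin K → ZMod N, ∑ t' : ZMod N,
              W y y' * B y y' * B (Function.update y m t') y' := by
            refine Finset.sum_congr rfl fun y' _ => ?_
            rw [hGdef, Finset.mul_sum]
        _ = ∑ y' : Fin K → ZMod N, ∑ t' : ZMod N,
            (fun (z : Fin K → ZMod N) (_ : ZMod N) =>
              W y z * (B y z * B (Function.update y m (z m)) z))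
              (Function.update y' m t') (y' m) := by
            refine Finset.sum_congr rfl fun y' _ => Finset.sum_congr rfl fun t' _ => ?_
            show W y y' * B y y' * B (Function.update y m t') y'
              = W y (Function.update y' m t') * (B y (Function.update y' m t')
                  * B (Function.update y m (Function.update y' m t' m)) (Function.update y' m t'))
            rw [Function.update_self, hWright, hBright, hBright]
            ring
        _ = ∑ y' : Fin K → ZMod N, ∑ _t' : ZMod N,
            W y y' * (B y y' * B (Function.update y m (y' m)) y') :=
            sum_update_bij m
              (fun z _ => W y z * (B y z * B (Function.update y m (z m)) z))
        _ = (N : ℝ) * ∑ y' : Fin K → ZMod N,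
            W y y' * (B y y' * B (Function.update y m (y' m)) y') := by
            rw [Finset.sum_congr rfl (fun y' _ => sum_const_zmod _), ← Finset.mul_sum]
    calc ∑ y : Fin K → ZMod N, ∑ y' : Fin K → ZMod N, W y y' * (G y y') ^ 2
        = ∑ y' : Fin K → ZMod N, ∑ y : Fin K → ZMod N, W y y' * (G y y') ^ 2 :=
          Finset.sum_comm
      _ = ∑ y' : Fin K → ZMod N, (N : ℝ) * ∑ y : Fin K → ZMod N, W y y' * B y y' * G y y' :=
          Finset.sum_congr rfl fun y' _ => step2 y'
      _ = (N : ℝ) * ∑ y' : Fin K → ZMod N, ∑ y : Fin K → ZMod N, W y y' * B y y' * G y y' := by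
          rw [← Finset.mul_sum]
      _ = (N : ℝ) * ∑ y : Fin K → ZMod N, ∑ y' : Fin K → ZMod N, W y y' * B y y' * G y y' := by
          congr 1
          exact Finset.sum_comm
      _ = (N : ℝ) * ∑ y : Fin K → ZMod N, (N : ℝ) * ∑ y' : Fin K → ZMod N,
            W y y' * (B y y' * B (Function.update y m (y' m)) y') := by
          rw [Finset.sum_congr rfl (fun y _ => step3 y)]
      _ = (N : ℝ) ^ 2 * sd1 := by
          rw [← Finset.mul_sum, ← hF5]
          ring
  have hCS : (∑ y : Fin K → ZMod N, ∑ y' : Fin K → ZMod N, A y y' * G y y') ^ 2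
      ≤ (∑ y : Fin K → ZMod N, ∑ y' : Fin K → ZMod N, W y y')
        * ∑ y : Fin K → ZMod N, ∑ y' : Fin K → ZMod N, W y y' * (G y y') ^ 2 := by
    have habs : |∑ y : Fin K → ZMod N, ∑ y' : Fin K → ZMod N, A y y' * G y y'|
        ≤ ∑ y : Fin K → ZMod N, ∑ y' : Fin K → ZMod N, W y y' * |G y y'| := by
      refine (Finset.abs_sum_le_sum_abs _ _).trans (Finset.sum_le_sum fun y _ => ?_)
      refine (Finset.abs_sum_le_sum_abs _ _).trans (Finset.sum_le_sum fun y' _ => ?_)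
      rw [abs_mul]
      exact mul_le_mul_of_nonneg_right (hAbs y y') (abs_nonneg _)
    have h := Finset.sum_mul_sq_le_sq_mul_sq Finset.univ
      (fun p : (Fin K → ZMod N) × (Fin K → ZMod N) => Real.sqrt (W p.1 p.2))
      (fun p : (Fin K → ZMod N) × (Fin K → ZMod N) => Real.sqrt (W p.1 p.2) * |G p.1 p.2|)
    have e1 : (∑ p : (Fin K → ZMod N) × (Fin K → ZMod N),
        Real.sqrt (W p.1 p.2) * (Real.sqrt (W p.1 p.2) * |G p.1 p.2|))
        = ∑ y : Fin K → ZMod N, ∑ y' : Fin K → ZMod N, W y y' * |G y y'| := by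
      rw [Fintype.sum_prod_type]
      exact Finset.sum_congr rfl fun y _ => Finset.sum_congr rfl fun y' _ => by
        rw [← mul_assoc, Real.mul_self_sqrt (hWnn _ _)]
    have e2 : (∑ p : (Fin K → ZMod N) × (Fin K → ZMod N), Real.sqrt (W p.1 p.2) ^ 2)
        = ∑ y : Fin K → ZMod N, ∑ y' : Fin K → ZMod N, W y y' := by
      rw [Fintype.sum_prod_type]
      exact Finset.sum_congr rfl fun y _ => Finset.sum_congr rfl fun y' _ => by
        rw [Real.sq_sqrt (hWnn _ _)]
    have e3 : (∑ p : (Fin K → ZMod N) × (Fin K → ZMod N),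
        (Real.sqrt (W p.1 p.2) * |G p.1 p.2|) ^ 2)
        = ∑ y : Fin K → ZMod N, ∑ y' : Fin K → ZMod N, W y y' * (G y y') ^ 2 := by
      rw [Fintype.sum_prod_type]
      exact Finset.sum_congr rfl fun y _ => Finset.sum_congr rfl fun y' _ => by
        rw [mul_pow, Real.sq_sqrt (hWnn _ _), sq_abs]
    rw [e1, e2, e3] at h
    calc (∑ y : Fin K → ZMod N, ∑ y' : Fin K → ZMod N, A y y' * G y y') ^ 2
        = |∑ y : Fin K → ZMod N, ∑ y' : Fin K → ZMod N, A y y' * G y y'| ^ 2 :=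
          (sq_abs _).symm
      _ ≤ (∑ y : Fin K → ZMod N, ∑ y' : Fin K → ZMod N, W y y' * |G y y'|) ^ 2 :=
          pow_le_pow_left₀ (abs_nonneg _) habs 2
      _ ≤ _ := h
  -- assemble
  have hmain : sd ^ 2 ≤ sP * sd1 := by
    rw [hE1, ← hE2, hE3] at hCS
    have h2 : (0 : ℝ) < (N : ℝ) ^ 2 := by positivity
    have h3 : (N : ℝ) ^ 2 * sd ^ 2 ≤ (N : ℝ) ^ 2 * (sP * sd1) := by nlinarith [hCS]
    exact le_of_mul_le_mul_left h3 h2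
  have hcc : sP / (N : ℝ) ^ (2 * K) * (sd1 / (N : ℝ) ^ (2 * K))
      = sP * sd1 / ((N : ℝ) ^ (2 * K)) ^ 2 := by ring
  rw [hJd, hJd1, hPd, hcc, div_pow]
  exact (div_le_div_iff_of_pos_right (pow_pos (pow_pos hN0 _) 2)).mpr hmain
end

section
/- (Properties of dual functions.) Let N be a prime and k ≥ 3. (i) For every F : ZMod N → ℝ one has E(F · DF) = ‖F‖_{U^{k−1}}^{2^{k−1}} and ‖DF‖_{(U^{k−1})^*} = ‖F‖_{U^{k−1}}^{2^{k−1}−1}. (ii) Moreover, for every ε > 0 there is ε₀ > 0 and N₀ such that if N ≥ N₀, ν : ZMod N → ℝ with ν ≥ 0 satisfies the (2^{k−1}−1, k−1, 1)-linear forms condition with error ε₀, and |F(x)| ≤ ν(x) + 1 for all x, then ‖DF‖_{L^∞} ≤ 2^{2^{k−1}−1} + ε, where ‖g‖_{L^∞} := max_x |g(x)|. -/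
open Finset

set_option linter.unusedSectionVars false
section CS
variable {N : ℕ} [NeZero N] {d : ℕ}

/-- raw (unnormalized) Gowers sum -/
noncomputable def rawT (N : ℕ) [NeZero N] (d : ℕ) (f : (Fin d → Bool) → ZMod N → ℝ) : ℝ :=
  ∑ x : ZMod N, ∑ h : Fin d → ZMod N,
    ∏ ω : Fin d → Bool, f ω (x + ∑ i : Fin d, if ω i then h i else 0)

noncomputable def AA (N : ℕ) [NeZero N] (d : ℕ) (f : (Fin d → Bool) → ZMod N → ℝ)
    (i : Fin d) (x : ZMod N) (h : Fin d → ZMod N) : ℝ :=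
  ∏ ω ∈ univ.filter (fun ω : Fin d → Bool => ω i = false),
    f ω (x + ∑ j : Fin d, if ω j then h j else 0)

noncomputable def BB (N : ℕ) [NeZero N] (d : ℕ) (f : (Fin d → Bool) → ZMod N → ℝ)
    (i : Fin d) (x : ZMod N) (h : Fin d → ZMod N) : ℝ :=
  ∏ ω ∈ univ.filter (fun ω : Fin d → Bool => ω i = true),
    f ω (x + ∑ j : Fin d, if ω j ∧ j ≠ i then h j else 0)

lemma AA_update (f : (Fin d → Bool) → ZMod N → ℝ) (i : Fin d) (x : ZMod N)
    (h : Fin d → ZMod N) (t : ZMod N) :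
    AA N d f i x (Function.update h i t) = AA N d f i x h := by
  unfold AA
  refine Finset.prod_congr rfl fun ω hω => ?_
  have hωi : ω i = false := (Finset.mem_filter.1 hω).2
  congr 1
  congr 1
  refine Finset.sum_congr rfl fun j _ => ?_
  by_cases hj : j = i
  · subst hj; simp [hωi]
  · simp [Function.update_of_ne hj]

lemma BB_update (f : (Fin d → Bool) → ZMod N → ℝ) (i : Fin d) (x : ZMod N)
    (h : Fin d → ZMod N) (t : ZMod N) :
    BB N d f i x (Function.update h i t) = BB N d f i x h := by
  unfold BB
  refine Finset.prod_congr rfl fun ω hω => ?_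
  congr 1
  congr 1
  refine Finset.sum_congr rfl fun j _ => ?_
  by_cases hj : j = i
  · subst hj; simp
  · simp [Function.update_of_ne hj]

/-- split the full product into the two halves -/
lemma prod_split (f : (Fin d → Bool) → ZMod N → ℝ) (i : Fin d) (x : ZMod N)
    (h : Fin d → ZMod N) :
    (∏ ω : Fin d → Bool, f ω (x + ∑ j : Fin d, if ω j then h j else 0)) =
      AA N d f i x h * BB N d f i (x + h i) h := by
  have hB : (∏ ω ∈ univ.filter (fun ω : Fin d → Bool => ¬ ω i = false),
      f ω (x + ∑ j : Fin d, if ω j then h j else 0)) = BB N d f i (x + h i) h := by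
    unfold BB
    refine Finset.prod_congr (by ext ω; simp) fun ω hω => ?_
    have hωi : ω i = true := (Finset.mem_filter.1 hω).2
    have hsum : (∑ j : Fin d, if ω j then h j else 0)
        = h i + ∑ j : Fin d, if ω j ∧ j ≠ i then h j else 0 := by
      have hterm : ∀ j : Fin d, (if ω j then h j else 0)
          = (if j = i then h i else 0) + (if ω j ∧ j ≠ i then h j else 0) := by
        intro j
        by_cases hj : j = i
        · subst hj; simp [hωi]
        · simp [hj]
      rw [Finset.sum_congr rfl fun j _ => hterm j, Finset.sum_add_distrib,
        Finset.sum_ite_eq' univ i (fun _ => h i)]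
      simp
    rw [hsum, ← add_assoc]
  rw [← Finset.prod_filter_mul_prod_filter_not univ (fun ω : Fin d → Bool => ω i = false), hB]
  rfl

lemma update_add_bijective (i : Fin d) (t : ZMod N) :
    Function.Bijective (fun h : Fin d → ZMod N => Function.update h i (h i + t)) := by
  have : Function.LeftInverse (fun h : Fin d → ZMod N => Function.update h i (h i - t))
      (fun h : Fin d → ZMod N => Function.update h i (h i + t)) := by
    intro h
    funext j
    by_cases hj : j = i
    · subst hj; simp
    · simp [Function.update_of_ne hj]
  have that : Function.RightInverse (fun h : Fin d → ZMod N => Function.update h i (h i - t))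
      (fun h : Fin d → ZMod N => Function.update h i (h i + t)) := by
    intro h
    funext j
    by_cases hj : j = i
    · subst hj; simp
    · simp [Function.update_of_ne hj]
  exact ⟨this.injective, that.surjective⟩

lemma update_sub_bijective (i : Fin d) (x : ZMod N) :
    Function.Bijective (fun h : Fin d → ZMod N => Function.update h i (h i - x)) := by
  have := update_add_bijective (N := N) (d := d) i (-x)
  simpa [sub_eq_add_neg] using this

lemma decouple (i : Fin d) (K : (Fin d → ZMod N) → ZMod N → ℝ)
    (hK : ∀ h t y, K (Function.update h i t) y = K h y) :
    (N : ℝ) * ∑ h : Fin d → ZMod N, K h (h i)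
      = ∑ h : Fin d → ZMod N, ∑ y : ZMod N, K h y := by
  have h1 : (N : ℝ) * ∑ h : Fin d → ZMod N, K h (h i)
      = ∑ t : ZMod N, ∑ h : Fin d → ZMod N, K h (h i) := by
    rw [Finset.sum_const, card_univ, ZMod.card, nsmul_eq_mul]
  rw [h1]
  have h2 : ∀ t : ZMod N, (∑ h : Fin d → ZMod N, K h (h i))
      = ∑ h : Fin d → ZMod N, K h (h i + t) := by
    intro t
    refine (Fintype.sum_bijective _ (update_add_bijective i t)
      (fun h => K h (h i + t)) (fun h => K h (h i)) fun h => ?_).symm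
    simp [hK]
  rw [Finset.sum_congr rfl fun t _ => h2 t, Finset.sum_comm]
  refine Finset.sum_congr rfl fun h _ => ?_
  exact Fintype.sum_bijective (fun t => h i + t) (Equiv.addLeft (h i)).bijective
    (fun t => K h (h i + t)) (fun y => K h y) fun t => rfl

lemma key_factor (i : Fin d) (A' B' : ZMod N → (Fin d → ZMod N) → ℝ)
    (hA : ∀ x h t, A' x (Function.update h i t) = A' x h)
    (hB : ∀ x h t, B' x (Function.update h i t) = B' x h) :
    (N : ℝ) * ∑ x : ZMod N, ∑ h : Fin d → ZMod N, A' x h * B' (x + h i) h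
      = ∑ h : Fin d → ZMod N, (∑ x : ZMod N, A' x h) * (∑ y : ZMod N, B' y h) := by
  have step1 : ∀ x : ZMod N, (∑ h : Fin d → ZMod N, A' x h * B' (x + h i) h)
      = ∑ h : Fin d → ZMod N, A' x h * B' (h i) h := by
    intro x
    refine (Fintype.sum_bijective _ (update_sub_bijective i x)
      (fun h => A' x h * B' (h i) h) (fun h => A' x h * B' (x + h i) h) fun h => ?_).symm
    simp only [hA, hB, Function.update_self]
    rw [show x + (h i - x) = h i by ring]
  rw [Finset.sum_congr rfl fun x _ => step1 x, Finset.sum_comm]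
  have h3 : ∀ h : Fin d → ZMod N, (∑ x : ZMod N, A' x h * B' (h i) h)
      = (∑ x : ZMod N, A' x h) * B' (h i) h := by
    intro h; rw [Finset.sum_mul]
  rw [Finset.sum_congr rfl fun h _ => h3 h]
  have := decouple i (fun h y => (∑ x : ZMod N, A' x h) * B' y h) ?_
  · rw [this]
    exact Finset.sum_congr rfl fun h _ => (Finset.mul_sum _ _ _).symm
  · intro h t y
    simp only [hB]
    congr 1
    exact Finset.sum_congr rfl fun x _ => hA x h t

lemma AA_f0 (f : (Fin d → Bool) → ZMod N → ℝ) (i : Fin d) (x : ZMod N) (h : Fin d → ZMod N) :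
    AA N d (fun ω => f (Function.update ω i false)) i x h = AA N d f i x h := by
  unfold AA
  refine Finset.prod_congr rfl fun ω hω => ?_
  have hωi : ω i = false := (Finset.mem_filter.1 hω).2
  have : Function.update ω i false = ω := by
    conv_lhs => rw [← hωi]
    exact Function.update_eq_self i ω
  simp only [this]

lemma BB_f1 (f : (Fin d → Bool) → ZMod N → ℝ) (i : Fin d) (y : ZMod N) (h : Fin d → ZMod N) :
    BB N d (fun ω => f (Function.update ω i true)) i y h = BB N d f i y h := by
  unfold BB
  refine Finset.prod_congr rfl fun ω hω => ?_
  have hωi : ω i = true := (Finset.mem_filter.1 hω).2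
  have : Function.update ω i true = ω := by
    conv_lhs => rw [← hωi]
    exact Function.update_eq_self i ω
  simp only [this]

lemma BB_f0 (f : (Fin d → Bool) → ZMod N → ℝ) (i : Fin d) (y : ZMod N) (h : Fin d → ZMod N) :
    BB N d (fun ω => f (Function.update ω i false)) i y h = AA N d f i y h := by
  unfold AA BB
  refine Finset.prod_nbij' (fun ω => Function.update ω i false)
    (fun ω => Function.update ω i true) ?_ ?_ ?_ ?_ ?_
  · intro ω hω; simp
  · intro ω hω; simp
  · intro ω hω
    have hωi : ω i = true := by simpa using (Finset.mem_filter.1 hω).2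
    funext j
    by_cases hj : j = i
    · subst hj; simp [hωi]
    · simp [Function.update_of_ne hj]
  · intro ω hω
    have hωi : ω i = false := by simpa using (Finset.mem_filter.1 hω).2
    funext j
    by_cases hj : j = i
    · subst hj; simp [hωi]
    · simp [Function.update_of_ne hj]
  · intro ω hω
    congr 1
    congr 1
    refine Finset.sum_congr rfl fun j _ => ?_
    by_cases hj : j = i
    · subst hj; simp
    · simp [Function.update_of_ne hj, hj]

lemma AA_f1 (f : (Fin d → Bool) → ZMod N → ℝ) (i : Fin d) (x : ZMod N) (h : Fin d → ZMod N) :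
    AA N d (fun ω => f (Function.update ω i true)) i x h = BB N d f i x h := by
  unfold AA BB
  refine Finset.prod_nbij' (fun ω => Function.update ω i true)
    (fun ω => Function.update ω i false) ?_ ?_ ?_ ?_ ?_
  · intro ω hω; simp
  · intro ω hω; simp
  · intro ω hω
    have hωi : ω i = false := by simpa using (Finset.mem_filter.1 hω).2
    funext j
    by_cases hj : j = i
    · subst hj; simp [hωi]
    · simp [Function.update_of_ne hj]
  · intro ω hω
    have hωi : ω i = true := by simpa using (Finset.mem_filter.1 hω).2
    funext j
    by_cases hj : j = i
    · subst hj; simp [hωi]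
    · simp [Function.update_of_ne hj]
  · intro ω hω
    have hωi : ω i = false := by simpa using (Finset.mem_filter.1 hω).2
    congr 1
    congr 1
    refine Finset.sum_congr rfl fun j _ => ?_
    by_cases hj : j = i
    · subst hj; simp [hωi]
    · simp only [Function.update_of_ne hj]
      have : (ω j = true ∧ j ≠ i) ↔ (ω j = true) := by
        constructor
        · exact fun hc => hc.1
        · exact fun hc => ⟨hc, hj⟩
      by_cases hωj : ω j = true
      · simp [hωj, hj]
      · simp [hωj]

lemma gowersInner_eq (f : (Fin d → Bool) → ZMod N → ℝ) :
    gowersInner N d f = rawT N d f / (N : ℝ) ^ (d + 1) := rfl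

lemma rawT_eq (f : (Fin d → Bool) → ZMod N → ℝ) (i : Fin d) :
    rawT N d f = ∑ x : ZMod N, ∑ h : Fin d → ZMod N,
      AA N d f i x h * BB N d f i (x + h i) h := by
  unfold rawT
  exact Finset.sum_congr rfl fun x _ => Finset.sum_congr rfl fun h _ => prod_split f i x h

lemma N_mul_rawT (f : (Fin d → Bool) → ZMod N → ℝ) (i : Fin d) :
    (N : ℝ) * rawT N d f = ∑ h : Fin d → ZMod N,
      (∑ x : ZMod N, AA N d f i x h) * (∑ y : ZMod N, BB N d f i y h) := by
  rw [rawT_eq f i]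
  exact key_factor i (fun x h => AA N d f i x h) (fun y h => BB N d f i y h)
    (fun x h t => AA_update f i x h t) (fun y h t => BB_update f i y h t)

lemma N_mul_rawT_f0 (f : (Fin d → Bool) → ZMod N → ℝ) (i : Fin d) :
    (N : ℝ) * rawT N d (fun ω => f (Function.update ω i false))
      = ∑ h : Fin d → ZMod N, (∑ x : ZMod N, AA N d f i x h) ^ 2 := by
  rw [rawT_eq (fun ω => f (Function.update ω i false)) i]
  have e : ∀ x : ZMod N, ∀ h : Fin d → ZMod N,
      AA N d (fun ω => f (Function.update ω i false)) i x h
        * BB N d (fun ω => f (Function.update ω i false)) i (x + h i) h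
      = AA N d f i x h * AA N d f i (x + h i) h := by
    intro x h; rw [AA_f0, BB_f0]
  rw [Finset.sum_congr rfl fun x _ => Finset.sum_congr rfl fun h _ => e x h]
  rw [key_factor i (fun x h => AA N d f i x h) (fun y h => AA N d f i y h)
    (fun x h t => AA_update f i x h t) (fun y h t => AA_update f i y h t)]
  exact Finset.sum_congr rfl fun h _ => (sq _).symm

lemma N_mul_rawT_f1 (f : (Fin d → Bool) → ZMod N → ℝ) (i : Fin d) :
    (N : ℝ) * rawT N d (fun ω => f (Function.update ω i true))
      = ∑ h : Fin d → ZMod N, (∑ x : ZMod N, BB N d f i x h) ^ 2 := by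
  rw [rawT_eq (fun ω => f (Function.update ω i true)) i]
  have e : ∀ x : ZMod N, ∀ h : Fin d → ZMod N,
      AA N d (fun ω => f (Function.update ω i true)) i x h
        * BB N d (fun ω => f (Function.update ω i true)) i (x + h i) h
      = BB N d f i x h * BB N d f i (x + h i) h := by
    intro x h; rw [AA_f1, BB_f1]
  rw [Finset.sum_congr rfl fun x _ => Finset.sum_congr rfl fun h _ => e x h]
  rw [key_factor i (fun x h => BB N d f i x h) (fun y h => BB N d f i y h)
    (fun x h t => BB_update f i x h t) (fun y h t => BB_update f i y h t)]
  exact Finset.sum_congr rfl fun h _ => (sq _).symm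

lemma rawT_sq_le (f : (Fin d → Bool) → ZMod N → ℝ) (i : Fin d) :
    rawT N d f ^ 2 ≤ rawT N d (fun ω => f (Function.update ω i false))
      * rawT N d (fun ω => f (Function.update ω i true)) := by
  have hc := Finset.sum_mul_sq_le_sq_mul_sq Finset.univ
    (fun h : Fin d → ZMod N => ∑ x : ZMod N, AA N d f i x h)
    (fun h : Fin d → ZMod N => ∑ y : ZMod N, BB N d f i y h)
  have key : ((N : ℝ) * rawT N d f) ^ 2
      ≤ ((N : ℝ) * rawT N d (fun ω => f (Function.update ω i false)))
        * ((N : ℝ) * rawT N d (fun ω => f (Function.update ω i true))) := by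
    rw [N_mul_rawT f i, N_mul_rawT_f0 f i, N_mul_rawT_f1 f i]
    exact hc
  have hN0 : (0 : ℝ) < (N : ℝ) := by
    exact_mod_cast Nat.pos_of_ne_zero (NeZero.ne N)
  rw [mul_pow] at key
  rw [show ((N : ℝ) * rawT N d (fun ω => f (Function.update ω i false)))
      * ((N : ℝ) * rawT N d (fun ω => f (Function.update ω i true)))
      = (N : ℝ) ^ 2 * (rawT N d (fun ω => f (Function.update ω i false))
        * rawT N d (fun ω => f (Function.update ω i true))) by ring] at key
  exact le_of_mul_le_mul_left key (pow_pos hN0 2)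

lemma cs_step (f : (Fin d → Bool) → ZMod N → ℝ) (i : Fin d) :
    gowersInner N d f ^ 2 ≤ gowersInner N d (fun ω => f (Function.update ω i false))
      * gowersInner N d (fun ω => f (Function.update ω i true)) := by
  rw [gowersInner_eq, gowersInner_eq, gowersInner_eq, div_pow, div_mul_div_comm]
  have hP : (0 : ℝ) < (N : ℝ) ^ (d + 1) := by
    have hN0 : (0 : ℝ) < (N : ℝ) := by
      exact_mod_cast Nat.pos_of_ne_zero (NeZero.ne N)
    exact pow_pos hN0 _
  rw [show ((N : ℝ) ^ (d + 1)) * ((N : ℝ) ^ (d + 1)) = ((N : ℝ) ^ (d + 1)) ^ 2 by ring]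
  exact (div_le_div_iff_of_pos_right (pow_pos hP 2)).2 (rawT_sq_le f i)

lemma inner_const_nonneg (hd : d ≠ 0) (F : ZMod N → ℝ) :
    0 ≤ gowersInner N d (fun _ => F) := by
  have i : Fin d := ⟨0, Nat.pos_of_ne_zero hd⟩
  have hN0 : (0 : ℝ) < (N : ℝ) := by
    exact_mod_cast Nat.pos_of_ne_zero (NeZero.ne N)
  have e := N_mul_rawT (N := N) (d := d) (fun _ => F) i
  have hBA : ∀ y h, BB N d (fun _ => F) i y h = AA N d (fun _ => F) i y h :=
    fun y h => BB_f0 (fun _ => F) i y h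
  have hT : 0 ≤ rawT N d (fun _ => F) := by
    have : 0 ≤ (N : ℝ) * rawT N d (fun _ => F) := by
      rw [e]
      refine Finset.sum_nonneg fun h _ => ?_
      rw [Finset.sum_congr rfl fun y _ => hBA y h]
      exact mul_self_nonneg _
    nlinarith
  rw [gowersInner_eq]
  exact div_nonneg hT (le_of_lt (pow_pos hN0 _))

/-- merge: take σ on S, ω off S -/
def mrg (S : Finset (Fin d)) (σ ω : Fin d → Bool) : Fin d → Bool :=
  fun j => if j ∈ S then σ j else ω j

def Tset (d : ℕ) (S : Finset (Fin d)) : Finset (Fin d → Bool) :=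
  univ.filter (fun σ => ∀ j, j ∉ S → σ j = false)

lemma mrg_empty (σ ω : Fin d → Bool) : mrg ∅ σ ω = ω := by
  funext j; simp [mrg]

lemma mrg_univ (σ ω : Fin d → Bool) : mrg univ σ ω = σ := by
  funext j; simp [mrg]

lemma mrg_update {S : Finset (Fin d)} {i : Fin d} (hi : i ∉ S) (σ ω : Fin d → Bool) (b : Bool) :
    mrg S σ (Function.update ω i b) = mrg (insert i S) (Function.update σ i b) ω := by
  funext j
  by_cases hj : j = i
  · subst hj; simp [mrg, hi]
  · by_cases hjS : j ∈ S
    · simp [mrg, hjS, Finset.mem_insert, hj, Function.update_of_ne hj]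
    · simp [mrg, hjS, Finset.mem_insert, hj, Function.update_of_ne hj]

lemma Tset_empty : Tset d ∅ = {fun _ => false} := by
  ext σ
  simp only [Tset, Finset.mem_filter, Finset.mem_univ, true_and, Finset.notMem_empty,
    not_false_iff, forall_true_left, Finset.mem_singleton]
  constructor
  · intro hσ; funext j; exact hσ j
  · intro hσ j; rw [hσ]

lemma Tset_mem_val {S : Finset (Fin d)} {i : Fin d} (hi : i ∉ S) {σ : Fin d → Bool}
    (hσ : σ ∈ Tset d S) : σ i = false := by
  simp only [Tset, Finset.mem_filter] at hσ
  exact hσ.2 i hi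

lemma Tset_insert {S : Finset (Fin d)} {i : Fin d} (hi : i ∉ S) :
    Tset d (insert i S) = Tset d S ∪ (Tset d S).image (fun σ => Function.update σ i true) := by
  ext σ
  simp only [Tset, Finset.mem_filter, Finset.mem_univ, true_and, Finset.mem_union,
    Finset.mem_image]
  constructor
  · intro hσ
    by_cases hσi : σ i = false
    · left
      intro j hj
      by_cases hji : j = i
      · subst hji; exact hσi
      · exact hσ j (by simp [Finset.mem_insert, hji, hj])
    · right
      refine ⟨Function.update σ i false, ?_, ?_⟩
      · intro j hj
        by_cases hji : j = i
        · subst hji; simp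
        · rw [Function.update_of_ne hji]
          exact hσ j (by simp [Finset.mem_insert, hji, hj])
      · funext j
        by_cases hji : j = i
        · subst hji
          simp [Bool.not_eq_false] at hσi
          simp [hσi]
        · simp [Function.update_of_ne hji]
  · intro hσ
    rcases hσ with hσ | ⟨τ, hτ, rfl⟩
    · intro j hj
      exact hσ j fun hjS => hj (Finset.mem_insert_of_mem hjS)
    · intro j hj
      have hji : j ≠ i := fun hc => hj (hc ▸ Finset.mem_insert_self i S)
      rw [Function.update_of_ne hji]
      exact hτ j fun hjS => hj (Finset.mem_insert_of_mem hjS)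

lemma prod_Tset_insert {S : Finset (Fin d)} {i : Fin d} (hi : i ∉ S)
    (g : (Fin d → Bool) → ℝ) :
    ∏ σ ∈ Tset d (insert i S), g σ
      = ∏ σ ∈ Tset d S, (g σ * g (Function.update σ i true)) := by
  have hinj : ∀ σ₁ ∈ Tset d S, ∀ σ₂ ∈ Tset d S,
      Function.update σ₁ i true = Function.update σ₂ i true → σ₁ = σ₂ := by
    intro σ₁ h₁ σ₂ h₂ he
    funext j
    by_cases hji : j = i
    · subst hji; rw [Tset_mem_val hi h₁, Tset_mem_val hi h₂]
    · have := congrFun he j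
      rwa [Function.update_of_ne hji, Function.update_of_ne hji] at this
  have hdisj : Disjoint (Tset d S) ((Tset d S).image (fun σ => Function.update σ i true)) := by
    rw [Finset.disjoint_left]
    intro σ hσ hσ'
    rcases Finset.mem_image.1 hσ' with ⟨τ, hτ, rfl⟩
    have h1 : Function.update τ i true i = false := Tset_mem_val hi hσ
    simp at h1
  rw [Tset_insert hi, Finset.prod_union hdisj, Finset.prod_image hinj,
    ← Finset.prod_mul_distrib]

lemma gcs_aux (f : (Fin d → Bool) → ZMod N → ℝ) (S : Finset (Fin d)) :
    |gowersInner N d f| ^ (2 ^ S.card)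
      ≤ ∏ σ ∈ Tset d S, |gowersInner N d (fun ω => f (mrg S σ ω))| := by
  induction S using Finset.induction_on with
  | empty =>
    rw [Tset_empty]
    simp only [Finset.card_empty, pow_zero, pow_one, Finset.prod_singleton]
    have : (fun ω => f (mrg (∅ : Finset (Fin d)) (fun _ => false) ω)) = f := by
      funext ω; rw [mrg_empty]
    rw [this]
  | @insert i S hi IH =>
    rw [Finset.card_insert_of_notMem hi]
    have h1 : |gowersInner N d f| ^ 2 ^ (S.card + 1)
        = (|gowersInner N d f| ^ 2 ^ S.card) ^ 2 := by
      rw [← pow_mul, pow_succ]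
    rw [h1]
    have h2 := pow_le_pow_left₀ (pow_nonneg (abs_nonneg _) _) IH 2
    refine h2.trans ?_
    rw [← Finset.prod_pow]
    rw [prod_Tset_insert hi]
    refine Finset.prod_le_prod (fun σ _ => sq_nonneg _) fun σ hσ => ?_
    have hσi : σ i = false := Tset_mem_val hi hσ
    have hcs := cs_step (fun ω => f (mrg S σ ω)) i
    have e0 : (fun ω => f (mrg S σ (Function.update ω i false)))
        = fun ω => f (mrg (insert i S) σ ω) := by
      funext ω
      rw [mrg_update hi]
      conv_rhs => rw [← Function.update_eq_self i σ]
      rw [hσi]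
    have e1 : (fun ω => f (mrg S σ (Function.update ω i true)))
        = fun ω => f (mrg (insert i S) (Function.update σ i true) ω) := by
      funext ω
      rw [mrg_update hi]
    rw [e0, e1] at hcs
    rw [sq_abs]
    calc gowersInner N d (fun ω => f (mrg S σ ω)) ^ 2
        ≤ gowersInner N d (fun ω => f (mrg (insert i S) σ ω))
          * gowersInner N d (fun ω => f (mrg (insert i S) (Function.update σ i true) ω)) := hcs
      _ ≤ |gowersInner N d (fun ω => f (mrg (insert i S) σ ω))
          * gowersInner N d (fun ω => f (mrg (insert i S) (Function.update σ i true) ω))| :=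
        le_abs_self _
      _ = _ := abs_mul _ _

lemma gcs (hd : d ≠ 0) (f : (Fin d → Bool) → ZMod N → ℝ) :
    |gowersInner N d f| ^ (2 ^ d)
      ≤ ∏ σ : Fin d → Bool, gowersInner N d (fun _ => f σ) := by
  have := gcs_aux f Finset.univ
  rw [Finset.card_univ, Fintype.card_fin] at this
  refine this.trans ?_
  have hTu : Tset d Finset.univ = Finset.univ := by
    ext σ; simp [Tset]
  rw [hTu]
  refine Finset.prod_le_prod ?_ ?_ |>.trans_eq rfl
  · intro σ _; exact abs_nonneg _
  · intro σ _
    have : (fun ω => f (mrg Finset.univ σ ω)) = fun _ => f σ := by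
      funext ω; rw [mrg_univ]
    rw [this]
    exact le_of_eq (abs_of_nonneg (inner_const_nonneg hd (f σ)))

lemma gowersNorm_nonneg (hd : d ≠ 0) (F : ZMod N → ℝ) : 0 ≤ gowersNorm N d F :=
  Real.rpow_nonneg (inner_const_nonneg hd F) _

lemma gowersNorm_pow (hd : d ≠ 0) (F : ZMod N → ℝ) :
    gowersNorm N d F ^ (2 ^ d : ℕ) = gowersInner N d (fun _ => F) := by
  unfold gowersNorm
  rw [← Real.rpow_natCast (gowersInner N d (fun _ => F) ^ ((1:ℝ)/2^d)) (2^d),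
    ← Real.rpow_mul (inner_const_nonneg hd F)]
  rw [show (1:ℝ)/2^d * ((2^d : ℕ) : ℝ) = 1 by
    push_cast
    field_simp]
  exact Real.rpow_one _

lemma gcs_norm (hd : d ≠ 0) (f : (Fin d → Bool) → ZMod N → ℝ) :
    |gowersInner N d f| ≤ ∏ σ : Fin d → Bool, gowersNorm N d (f σ) := by
  have h1 := gcs hd f
  have h2 : ∏ σ : Fin d → Bool, gowersInner N d (fun _ => f σ)
      = (∏ σ : Fin d → Bool, gowersNorm N d (f σ)) ^ (2 ^ d : ℕ) := by
    rw [← Finset.prod_pow]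
    exact Finset.prod_congr rfl fun σ _ => (gowersNorm_pow hd (f σ)).symm
  rw [h2] at h1
  exact le_of_pow_le_pow_left₀ (by positivity) (Finset.prod_nonneg fun σ _ => gowersNorm_nonneg hd _) h1

end CS

section Bridge
variable {N : ℕ} [NeZero N]

lemma avg_mul_dualFn (k : ℕ) (f F : ZMod N → ℝ) :
    avgZ N (fun x => f x * dualFn N k F x)
      = gowersInner N (k - 1) (fun ω => if ω = (fun _ => false) then f else F) := by
  unfold avgZ dualFn gowersInner
  have key : ∀ (x : ZMod N) (h : Fin (k - 1) → ZMod N),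
      (∏ ω : Fin (k - 1) → Bool,
        (if ω = (fun _ => false) then f else F) (x + ∑ i : Fin (k - 1), if ω i then h i else 0))
      = f x * ∏ ω ∈ Finset.univ.filter (fun ω : Fin (k - 1) → Bool => ω ≠ fun _ => false),
          F (x + ∑ i : Fin (k - 1), if ω i then h i else 0) := by
    intro x h
    rw [← Finset.prod_filter_mul_prod_filter_not Finset.univ
      (fun ω : Fin (k - 1) → Bool => ω = (fun _ => false))]
    congr 1
    · rw [Finset.filter_eq' Finset.univ (fun _ => false : Fin (k - 1) → Bool),
        if_pos (Finset.mem_univ _), Finset.prod_singleton, if_pos rfl]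
      simp
    · refine Finset.prod_congr rfl fun ω hω => ?_
      have hω' : ω ≠ (fun _ => false) := (Finset.mem_filter.1 hω).2
      rw [if_neg hω']
  have e1 : ∀ x : ZMod N,
      f x * ((∑ h : Fin (k - 1) → ZMod N,
        ∏ ω ∈ Finset.univ.filter (fun ω : Fin (k - 1) → Bool => ω ≠ fun _ => false),
          F (x + ∑ i : Fin (k - 1), if ω i then h i else 0)) / (N : ℝ) ^ (k - 1))
      = (∑ h : Fin (k - 1) → ZMod N,
          ∏ ω : Fin (k - 1) → Bool,
            (if ω = (fun _ => false) then f else F)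
              (x + ∑ i : Fin (k - 1), if ω i then h i else 0)) / (N : ℝ) ^ (k - 1) := by
    intro x
    rw [Finset.sum_congr rfl fun h _ => key x h, ← Finset.mul_sum, mul_div_assoc]
  rw [Finset.sum_congr rfl fun x _ => e1 x, ← Finset.sum_div, div_div, ← pow_succ]

lemma avg_self_dualFn (k : ℕ) (F : ZMod N → ℝ) :
    avgZ N (fun x => F x * dualFn N k F x) = gowersInner N (k - 1) (fun _ => F) := by
  rw [avg_mul_dualFn k F F]
  congr 1
  funext ω
  exact ite_self F

end Bridge

section PartI
variable {N : ℕ} [NeZero N]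

lemma gowersNorm_smul {d : ℕ} (hd : d ≠ 0) (c : ℝ) (hc : 0 ≤ c) (F : ZMod N → ℝ) :
    gowersNorm N d (fun x => c * F x) = c * gowersNorm N d F := by
  have hcard : (Finset.univ : Finset (Fin d → Bool)).card = 2 ^ d := by
    simp [Finset.card_univ, Fintype.card_fun]
  have hinner : gowersInner N d (fun _ => fun x => c * F x)
      = c ^ (2 ^ d) * gowersInner N d (fun _ => F) := by
    unfold gowersInner
    have hp : ∀ (x : ZMod N) (h : Fin d → ZMod N),
        (∏ ω : Fin d → Bool, (c * F (x + ∑ i : Fin d, if ω i then h i else 0)))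
        = c ^ (2 ^ d) * ∏ ω : Fin d → Bool, F (x + ∑ i : Fin d, if ω i then h i else 0) := by
      intro x h
      rw [Finset.prod_mul_distrib, Finset.prod_const, hcard]
    calc (∑ x : ZMod N, ∑ h : Fin d → ZMod N,
        ∏ ω : Fin d → Bool, (fun _ => fun x => c * F x) ω
          (x + ∑ i : Fin d, if ω i then h i else 0)) / (N : ℝ) ^ (d + 1)
        = (∑ x : ZMod N, ∑ h : Fin d → ZMod N, c ^ (2 ^ d) *
            ∏ ω : Fin d → Bool, F (x + ∑ i : Fin d, if ω i then h i else 0))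
              / (N : ℝ) ^ (d + 1) := by
          congr 1
          exact Finset.sum_congr rfl fun x _ => Finset.sum_congr rfl fun h _ => hp x h
      _ = c ^ (2 ^ d) * ((∑ x : ZMod N, ∑ h : Fin d → ZMod N,
            ∏ ω : Fin d → Bool, F (x + ∑ i : Fin d, if ω i then h i else 0))
              / (N : ℝ) ^ (d + 1)) := by
          rw [← mul_div_assoc]
          congr 1
          rw [Finset.mul_sum]
          exact Finset.sum_congr rfl fun x _ => (Finset.mul_sum _ _ _).symm
  unfold gowersNorm
  rw [hinner, Real.mul_rpow (pow_nonneg hc _) (inner_const_nonneg hd F)]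
  congr 1
  rw [← Real.rpow_natCast c (2 ^ d), ← Real.rpow_mul hc]
  rw [show ((2 ^ d : ℕ) : ℝ) * ((1 : ℝ) / 2 ^ d) = 1 by push_cast; field_simp]
  exact Real.rpow_one c

lemma avgZ_smul_mul (c : ℝ) (f g : ZMod N → ℝ) :
    avgZ N (fun x => (c * f x) * g x) = c * avgZ N (fun x => f x * g x) := by
  unfold avgZ
  rw [← mul_div_assoc]
  congr 1
  rw [Finset.mul_sum]
  exact Finset.sum_congr rfl fun x _ => by ring

lemma part_i_avg (k : ℕ) (hk : 3 ≤ k) (F : ZMod N → ℝ) :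
    avgZ N (fun x => F x * dualFn N k F x) = gowersNorm N (k - 1) F ^ (2 ^ (k - 1)) := by
  have hd : k - 1 ≠ 0 := by omega
  rw [avg_self_dualFn, ← gowersNorm_pow hd F]

lemma part_i_dual (k : ℕ) (hk : 3 ≤ k) (F : ZMod N → ℝ) :
    dualNorm N k (dualFn N k F) = gowersNorm N (k - 1) F ^ (2 ^ (k - 1) - 1) := by
  have hd : k - 1 ≠ 0 := by omega
  have hexp : 2 ^ (k - 1) - 1 ≠ 0 := by
    have h4 : 4 ≤ 2 ^ (k - 1) := by
      calc (4 : ℕ) = 2 ^ 2 := by norm_num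
        _ ≤ 2 ^ (k - 1) := Nat.pow_le_pow_right (by norm_num) (by omega)
    omega
  set G := gowersNorm N (k - 1) F with hG
  have hGnn : 0 ≤ G := gowersNorm_nonneg hd F
  have hub : ∀ r ∈ {r : ℝ | ∃ f : ZMod N → ℝ, gowersNorm N (k - 1) f ≤ 1 ∧
      r = |avgZ N (fun x => f x * dualFn N k F x)|}, r ≤ G ^ (2 ^ (k - 1) - 1) := by
    rintro r ⟨f, hf1, rfl⟩
    have hf0 : 0 ≤ gowersNorm N (k - 1) f := gowersNorm_nonneg hd f
    rw [avg_mul_dualFn]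
    refine (gcs_norm hd _).trans ?_
    rw [← Finset.mul_prod_erase Finset.univ _
      (Finset.mem_univ (fun _ => false : Fin (k - 1) → Bool))]
    have herase : ∀ σ ∈ Finset.univ.erase (fun _ => false : Fin (k - 1) → Bool),
        gowersNorm N (k - 1) (if σ = (fun _ => false) then f else F) = G := by
      intro σ hσ
      rw [if_neg (Finset.mem_erase.1 hσ).1]
    rw [Finset.prod_congr rfl herase, Finset.prod_const,
      Finset.card_erase_of_mem (Finset.mem_univ _), Finset.card_univ, if_pos rfl]
    rw [show Fintype.card (Fin (k - 1) → Bool) = 2 ^ (k - 1) by simp [Fintype.card_fun]]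
    calc gowersNorm N (k - 1) f * G ^ (2 ^ (k - 1) - 1)
        ≤ 1 * G ^ (2 ^ (k - 1) - 1) :=
          mul_le_mul_of_nonneg_right hf1 (pow_nonneg hGnn _)
      _ = G ^ (2 ^ (k - 1) - 1) := one_mul _
  have hbdd : BddAbove {r : ℝ | ∃ f : ZMod N → ℝ, gowersNorm N (k - 1) f ≤ 1 ∧
      r = |avgZ N (fun x => f x * dualFn N k F x)|} := ⟨G ^ (2 ^ (k - 1) - 1), hub⟩
  rcases eq_or_lt_of_le hGnn with hG0 | hGpos
  · -- G = 0
    have hGz : G = 0 := hG0.symm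
    have hzero_mem : (0 : ℝ) ∈ {r : ℝ | ∃ f : ZMod N → ℝ, gowersNorm N (k - 1) f ≤ 1 ∧
        r = |avgZ N (fun x => f x * dualFn N k F x)|} := by
      refine ⟨fun _ => 0, ?_, ?_⟩
      · have hi0 : gowersInner N (k - 1) (fun _ => fun _ => (0 : ℝ)) = 0 := by
          unfold gowersInner
          have : ∀ (x : ZMod N) (h : Fin (k - 1) → ZMod N),
              (∏ _ω : Fin (k - 1) → Bool, (0 : ℝ)) = 0 := by
            intro x h
            rw [Finset.prod_const]
            exact zero_pow (by simp [Finset.card_univ, Fintype.card_fun])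
          simp [this]
        unfold gowersNorm
        rw [hi0, Real.zero_rpow (by positivity)]
        norm_num
      · simp [avgZ]
    rw [hGz, zero_pow hexp]
    unfold dualNorm
    refine le_antisymm (csSup_le ⟨0, hzero_mem⟩ fun r hr => ?_) (le_csSup hbdd hzero_mem)
    have := hub r hr
    rwa [hGz, zero_pow hexp] at this
  · -- G > 0
    have hmem : G ^ (2 ^ (k - 1) - 1) ∈ {r : ℝ | ∃ f : ZMod N → ℝ,
        gowersNorm N (k - 1) f ≤ 1 ∧ r = |avgZ N (fun x => f x * dualFn N k F x)|} := by
      refine ⟨fun x => G⁻¹ * F x, ?_, ?_⟩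
      · rw [gowersNorm_smul hd G⁻¹ (inv_nonneg.2 hGnn) F, ← hG, inv_mul_cancel₀ (ne_of_gt hGpos)]
      · rw [avgZ_smul_mul, avg_self_dualFn, ← gowersNorm_pow hd F, ← hG]
        rw [show (2 : ℕ) ^ (k - 1) = (2 ^ (k - 1) - 1) + 1 by omega]
        rw [pow_succ]
        rw [show G⁻¹ * (G ^ (2 ^ (k - 1) - 1) * G) = G ^ (2 ^ (k - 1) - 1) * (G⁻¹ * G) by ring,
          inv_mul_cancel₀ (ne_of_gt hGpos), mul_one]
        exact (abs_of_nonneg (pow_nonneg hGnn _)).symm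
    exact le_antisymm (csSup_le ⟨_, hmem⟩ hub) (le_csSup hbdd hmem)

end PartI

section PartII

lemma card_nonzero_omega (d : ℕ) :
    (Finset.univ.filter (fun ω : Fin d → Bool => ω ≠ fun _ => false)).card = 2 ^ d - 1 := by
  have h : Finset.univ.filter (fun ω : Fin d → Bool => ω ≠ fun _ => false)
      = Finset.univ.erase (fun _ => false) := by
    ext σ
    simp [Finset.mem_erase, and_comm]
  rw [h, Finset.card_erase_of_mem (Finset.mem_univ _), Finset.card_univ]
  simp [Fintype.card_fun]

lemma lfc_term_bound {N : ℕ} [Fact (Nat.Prime N)] (k : ℕ) (hk : 3 ≤ k)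
    (ν : ZMod N → ℝ) (ε₀ : ℝ)
    (hlfc : LinearFormsCondition N ν (2 ^ (k - 1) - 1) (k - 1) 1 ε₀) (x : ZMod N)
    (S : Finset (Fin (k - 1) → Bool))
    (hS : S ⊆ Finset.univ.filter (fun ω : Fin (k - 1) → Bool => ω ≠ fun _ => false))
    (hS0 : S.Nonempty) :
    (∑ h : Fin (k - 1) → ZMod N,
        ∏ ω ∈ S, ν (x + ∑ j : Fin (k - 1), if ω j then h j else 0)) / (N : ℝ) ^ (k - 1)
      ≤ 1 + ε₀ := by
  classical
  set m := S.card with hm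
  let e : Fin m ≃ {ω // ω ∈ S} := S.equivFin.symm
  let L : Fin m → Fin (k - 1) → ℚ := fun i j => if (e i : Fin (k - 1) → Bool) j then 1 else 0
  have hmem_ne : ∀ i : Fin m, ((e i : Fin (k - 1) → Bool)) ≠ fun _ => false := by
    intro i
    have hmem : (e i : Fin (k - 1) → Bool) ∈ S := (e i).2
    exact (Finset.mem_filter.1 (hS hmem)).2
  have hLval : ∀ i j, L i j = 1 ∨ L i j = 0 := by
    intro i j
    by_cases hb : (e i : Fin (k - 1) → Bool) j = true
    · left; simp [L, hb]
    · right; simp [L, hb]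
  have hLnz : ∀ i, L i ≠ 0 := by
    intro i hL0
    obtain ⟨j, hj⟩ := Function.ne_iff.1 (hmem_ne i)
    have hjt : (e i : Fin (k - 1) → Bool) j = true := by
      cases hb : (e i : Fin (k - 1) → Bool) j
      · exact absurd hb hj
      · rfl
    have hc := congrFun hL0 j
    simp only [L, hjt, if_true, Pi.zero_apply] at hc
    norm_num at hc
  have hm1 : 1 ≤ m := Nat.one_le_iff_ne_zero.2 (by
    rw [hm]
    exact Finset.card_ne_zero.2 hS0)
  have hmm : m ≤ 2 ^ (k - 1) - 1 := by
    have hcc := Finset.card_le_card hS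
    rwa [card_nonzero_omega] at hcc
  have hnum : ∀ i j, (L i j).num.natAbs ≤ 1 ∧ (L i j).den ≤ 1 := by
    intro i j
    rcases hLval i j with h | h <;> rw [h] <;> constructor <;> simp
  have hprop : ∀ i i', i ≠ i' → ¬ ∃ q : ℚ, L i = q • L i' := by
    rintro i i' hne ⟨q, hq⟩
    have hcoe_ne : (e i : Fin (k - 1) → Bool) ≠ (e i' : Fin (k - 1) → Bool) := by
      intro hcc
      exact hne (e.injective (Subtype.ext hcc))
    obtain ⟨j₀, hj₀⟩ := Function.ne_iff.1 (hmem_ne i')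
    have hj₀t : (e i' : Fin (k - 1) → Bool) j₀ = true := by
      cases hb : (e i' : Fin (k - 1) → Bool) j₀
      · exact absurd hb hj₀
      · rfl
    have hqval : L i j₀ = q := by
      have hc := congrFun hq j₀
      rw [Pi.smul_apply, smul_eq_mul] at hc
      simpa [L, hj₀t] using hc
    rcases hLval i j₀ with h1 | h0
    · have hq1 : q = 1 := by rw [h1] at hqval; exact hqval.symm
      apply hcoe_ne
      funext j
      have hc := congrFun hq j
      rw [hq1, one_smul] at hc
      by_cases hbi : (e i : Fin (k - 1) → Bool) j = true <;>
        by_cases hbi' : (e i' : Fin (k - 1) → Bool) j = true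
      · rw [hbi, hbi']
      · exfalso; simp [L, hbi, hbi'] at hc
      · exfalso; simp [L, hbi, hbi'] at hc
      · rw [Bool.not_eq_true] at hbi hbi'
        rw [hbi, hbi']
    · have hq0 : q = 0 := by rw [h0] at hqval; exact hqval.symm
      apply hLnz i
      rw [hq, hq0, zero_smul]
  have key := hlfc m (k - 1) hm1 hmm (by omega) le_rfl L (fun _ => x) hnum hLnz hprop
  have hsum : (∑ y : Fin (k - 1) → ZMod N, ∏ i : Fin m,
        ν (∑ j : Fin (k - 1), ((L i j : ℚ) : ZMod N) * y j + (fun _ : Fin m => x) i))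
      = ∑ h : Fin (k - 1) → ZMod N,
          ∏ ω ∈ S, ν (x + ∑ j : Fin (k - 1), if ω j then h j else 0) := by
    refine Finset.sum_congr rfl fun h _ => ?_
    rw [← Finset.prod_attach S
      (fun ω => ν (x + ∑ j : Fin (k - 1), if ω j then h j else 0))]
    rw [← Finset.univ_eq_attach]
    rw [← Equiv.prod_comp e
      (fun a : {ω // ω ∈ S} => ν (x + ∑ j : Fin (k - 1), if (a : Fin (k - 1) → Bool) j then h j else 0))]
    refine Finset.prod_congr rfl fun i _ => ?_
    congr 1
    rw [add_comm]
    congr 1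
    refine Finset.sum_congr rfl fun j _ => ?_
    by_cases hb : (e i : Fin (k - 1) → Bool) j = true
    · simp [L, hb]
    · simp [L, hb]
  rw [hsum] at key
  have := (abs_le.1 key).2
  linarith

end PartII

/-- Properties of dual functions: the inner product and dual-norm identities, and
the uniform bound on `DF` for `F` dominated by `ν + 1` with `ν` satisfying a
linear forms condition. -/
theorem dual_function_properties (k : ℕ) (hk : 3 ≤ k) :
    (∀ (N : ℕ) [NeZero N], Nat.Prime N → ∀ F : ZMod N → ℝ,
      avgZ N (fun x => F x * dualFn N k F x) = gowersNorm N (k - 1) F ^ (2 ^ (k - 1)) ∧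
      dualNorm N k (dualFn N k F) = gowersNorm N (k - 1) F ^ (2 ^ (k - 1) - 1)) ∧
    (∀ ε : ℝ, 0 < ε → ∃ ε₀ : ℝ, 0 < ε₀ ∧ ∃ N₀ : ℕ,
      ∀ (N : ℕ) [Fact (Nat.Prime N)], N₀ ≤ N →
        ∀ ν F : ZMod N → ℝ, (∀ x, 0 ≤ ν x) →
          LinearFormsCondition N ν (2 ^ (k - 1) - 1) (k - 1) 1 ε₀ →
          (∀ x, |F x| ≤ ν x + 1) →
          ∀ x, |dualFn N k F x| ≤ 2 ^ (2 ^ (k - 1) - 1) + ε) := by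
  constructor
  · intro N _ hNp F
    exact ⟨part_i_avg k hk F, part_i_dual k hk F⟩
  · intro ε hε
    refine ⟨ε / 2 ^ (2 ^ (k - 1) - 1), by positivity, 0, ?_⟩
    intro N instNP hN ν F hν hlfc hF x
    have hNp : N.Prime := Fact.out
    have hNR : (0 : ℝ) < (N : ℝ) := by exact_mod_cast hNp.pos
    have hP : (0 : ℝ) < (N : ℝ) ^ (k - 1) := pow_pos hNR _
    set ε₀ : ℝ := ε / 2 ^ (2 ^ (k - 1) - 1) with hε₀
    have hε₀pos : 0 < ε₀ := by positivity
    have habs : |dualFn N k F x| ≤ (∑ h : Fin (k - 1) → ZMod N,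
        ∏ ω ∈ Finset.univ.filter (fun ω : Fin (k - 1) → Bool => ω ≠ fun _ => false),
          (ν (x + ∑ j : Fin (k - 1), if ω j then h j else 0) + 1)) / (N : ℝ) ^ (k - 1) := by
      unfold dualFn
      rw [abs_div, abs_of_pos hP]
      refine (div_le_div_iff_of_pos_right hP).2 ?_
      calc |∑ h : Fin (k - 1) → ZMod N,
            ∏ ω ∈ Finset.univ.filter (fun ω : Fin (k - 1) → Bool => ω ≠ fun _ => false),
              F (x + ∑ j : Fin (k - 1), if ω j then h j else 0)|
          ≤ ∑ h : Fin (k - 1) → ZMod N,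
            |∏ ω ∈ Finset.univ.filter (fun ω : Fin (k - 1) → Bool => ω ≠ fun _ => false),
              F (x + ∑ j : Fin (k - 1), if ω j then h j else 0)| :=
            Finset.abs_sum_le_sum_abs _ _
        _ ≤ ∑ h : Fin (k - 1) → ZMod N,
            ∏ ω ∈ Finset.univ.filter (fun ω : Fin (k - 1) → Bool => ω ≠ fun _ => false),
              (ν (x + ∑ j : Fin (k - 1), if ω j then h j else 0) + 1) := by
            refine Finset.sum_le_sum fun h _ => ?_
            rw [Finset.abs_prod]
            exact Finset.prod_le_prod (fun ω _ => abs_nonneg _) (fun ω _ => hF _)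
    have hexpand : (∑ h : Fin (k - 1) → ZMod N,
        ∏ ω ∈ Finset.univ.filter (fun ω : Fin (k - 1) → Bool => ω ≠ fun _ => false),
          (ν (x + ∑ j : Fin (k - 1), if ω j then h j else 0) + 1)) / (N : ℝ) ^ (k - 1)
        = ∑ S ∈ (Finset.univ.filter
            (fun ω : Fin (k - 1) → Bool => ω ≠ fun _ => false)).powerset,
            (∑ h : Fin (k - 1) → ZMod N,
              ∏ ω ∈ S, ν (x + ∑ j : Fin (k - 1), if ω j then h j else 0)) / (N : ℝ) ^ (k - 1) := by
      rw [← Finset.sum_div]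
      congr 1
      calc (∑ h : Fin (k - 1) → ZMod N,
          ∏ ω ∈ Finset.univ.filter (fun ω : Fin (k - 1) → Bool => ω ≠ fun _ => false),
            (ν (x + ∑ j : Fin (k - 1), if ω j then h j else 0) + 1))
          = ∑ h : Fin (k - 1) → ZMod N,
            ∑ S ∈ (Finset.univ.filter
              (fun ω : Fin (k - 1) → Bool => ω ≠ fun _ => false)).powerset,
              ∏ ω ∈ S, ν (x + ∑ j : Fin (k - 1), if ω j then h j else 0) := by
            refine Finset.sum_congr rfl fun h _ => ?_
            rw [Finset.prod_add]
            exact Finset.sum_congr rfl fun S _ => by rw [Finset.prod_const_one, mul_one]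
        _ = _ := Finset.sum_comm
    have hterm : ∀ S ∈ (Finset.univ.filter
        (fun ω : Fin (k - 1) → Bool => ω ≠ fun _ => false)).powerset,
        (∑ h : Fin (k - 1) → ZMod N,
          ∏ ω ∈ S, ν (x + ∑ j : Fin (k - 1), if ω j then h j else 0)) / (N : ℝ) ^ (k - 1)
          ≤ 1 + ε₀ := by
      intro S hSp
      rcases S.eq_empty_or_nonempty with rfl | hS0
      · have hone : (∑ h : Fin (k - 1) → ZMod N,
            ∏ ω ∈ (∅ : Finset (Fin (k - 1) → Bool)),
              ν (x + ∑ j : Fin (k - 1), if ω j then h j else 0)) = (N : ℝ) ^ (k - 1) := by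
          simp only [Finset.prod_empty, Finset.sum_const, Finset.card_univ, nsmul_eq_mul, mul_one]
          rw [show Fintype.card (Fin (k - 1) → ZMod N) = N ^ (k - 1) by
            simp [Fintype.card_fun, ZMod.card]]
          push_cast
          ring
        rw [hone, div_self (ne_of_gt hP)]
        linarith
      · exact lfc_term_bound k hk ν ε₀ hlfc x S (Finset.mem_powerset.1 hSp) hS0
    have h2ne : ((2 : ℝ) ^ (2 ^ (k - 1) - 1)) ≠ 0 := by positivity
    calc |dualFn N k F x|
        ≤ (∑ h : Fin (k - 1) → ZMod N,
            ∏ ω ∈ Finset.univ.filter (fun ω : Fin (k - 1) → Bool => ω ≠ fun _ => false),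
              (ν (x + ∑ j : Fin (k - 1), if ω j then h j else 0) + 1)) / (N : ℝ) ^ (k - 1) :=
          habs
      _ = ∑ S ∈ (Finset.univ.filter
            (fun ω : Fin (k - 1) → Bool => ω ≠ fun _ => false)).powerset,
            (∑ h : Fin (k - 1) → ZMod N,
              ∏ ω ∈ S, ν (x + ∑ j : Fin (k - 1), if ω j then h j else 0)) / (N : ℝ) ^ (k - 1) :=
          hexpand
      _ ≤ ∑ _S ∈ (Finset.univ.filter
            (fun ω : Fin (k - 1) → Bool => ω ≠ fun _ => false)).powerset, (1 + ε₀) :=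
          Finset.sum_le_sum hterm
      _ = ((Finset.univ.filter
            (fun ω : Fin (k - 1) → Bool => ω ≠ fun _ => false)).powerset.card : ℝ)
            * (1 + ε₀) := by rw [Finset.sum_const, nsmul_eq_mul]
      _ = 2 ^ (2 ^ (k - 1) - 1) * (1 + ε₀) := by
          rw [Finset.card_powerset, card_nonzero_omega]
          push_cast
          ring
      _ = 2 ^ (2 ^ (k - 1) - 1) + ε := by
          rw [hε₀, mul_add, mul_one, mul_div_cancel₀ _ h2ne]
end

section
/- (Each bounded function generates a low-complexity partition.) For every integer k ≥ 3 there is a constant C = C(k) such that the following holds. Let N be a prime, let ν : ZMod N → ℝ with ν ≥ 0 and E(ν) ≤ 2, let 0 < ε < 1 and 0 < η < 1/2, and let G : ZMod N → ℝ take all its values in the interval I := [−2^{2^{k−1}}, 2^{2^{k−1}}]. Then there exists a partition B of ZMod N into at most C/ε atoms such that: (i) for every atom A of B and all x, y ∈ A, |G(x) − G(y)| ≤ ε; and (ii) for every atom A of B there exists a continuous function Ψ_A : ℝ → [0,1], Lipschitz with constant at most C/(εη), such that E( |1_A(x) − Ψ_A(G(x))| · (ν(x)+1) ) ≤ C·η,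 where 1_A is the indicator function of A. -/
open Finset

private lemma clampLip (a b c : ℝ) (hc : 0 < c) (s t : ℝ) :
    |max 0 (min 1 (min ((s - a) / c) ((b - s) / c))) -
      max 0 (min 1 (min ((t - a) / c) ((b - t) / c)))| ≤ |s - t| / c := by
  have h0 : |min ((s - a) / c) ((b - s) / c) - min ((t - a) / c) ((b - t) / c)|
      ≤ |s - t| / c := by
    refine (abs_min_sub_min_le_max _ _ _ _).trans ?_
    have e1 : |(s - a) / c - (t - a) / c| = |s - t| / c := by
      rw [div_sub_div_same, show s - a - (t - a) = s - t by ring, abs_div, abs_of_pos hc]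
    have e2 : |(b - s) / c - (b - t) / c| = |s - t| / c := by
      rw [div_sub_div_same, show b - s - (b - t) = t - s by ring, abs_div, abs_of_pos hc,
        abs_sub_comm]
    rw [e1, e2, max_self]
  have h1 : |min 1 (min ((s - a) / c) ((b - s) / c)) -
      min 1 (min ((t - a) / c) ((b - t) / c))| ≤ |s - t| / c := by
    refine (abs_min_sub_min_le_max _ _ _ _).trans ?_
    rw [sub_self, abs_zero]
    exact max_le (by positivity) h0
  refine (abs_max_sub_max_le_max _ _ _ _).trans ?_
  rw [sub_self, abs_zero]
  exact max_le (by positivity) h1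

set_option maxHeartbeats 1000000 in
/-- Each function bounded by `2^{2^{k-1}}` generates a partition of `ZMod N` into
`O(1/ε)` atoms on which it is constant up to `ε`, whose atoms are approximable by
continuous (Lipschitz) functions of `G` in the weighted `L¹(ν+1)` sense. -/
theorem function_generates_partition (k : ℕ) (hk : 3 ≤ k) :
    ∃ C : ℝ, 0 < C ∧
      ∀ (N : ℕ) [NeZero N], Nat.Prime N →
        ∀ ν : ZMod N → ℝ, (∀ x, 0 ≤ ν x) → avgZ N ν ≤ 2 →
          ∀ ε η : ℝ, 0 < ε → ε < 1 → 0 < η → η < 1 / 2 →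
            ∀ G : ZMod N → ℝ, (∀ x, |G x| ≤ 2 ^ 2 ^ (k - 1)) →
              ∃ B : Finset (Finset (ZMod N)),
                (∀ A ∈ B, A.Nonempty) ∧
                (∀ A ∈ B, ∀ A' ∈ B, A ≠ A' → Disjoint A A') ∧
                (∀ x : ZMod N, ∃ A ∈ B, x ∈ A) ∧
                (B.card : ℝ) ≤ C / ε ∧
                (∀ A ∈ B, ∀ x ∈ A, ∀ y ∈ A, |G x - G y| ≤ ε) ∧
                (∀ A ∈ B, ∃ Ψ : ℝ → ℝ, Continuous Ψ ∧
                  (∀ t, 0 ≤ Ψ t ∧ Ψ t ≤ 1) ∧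
                  (∀ s t : ℝ, |Ψ s - Ψ t| ≤ C / (ε * η) * |s - t|) ∧
                  avgZ N (fun x =>
                    |(if x ∈ A then (1 : ℝ) else 0) - Ψ (G x)| * (ν x + 1)) ≤ C * η) := by
    classical
  set M : ℝ := 2 ^ 2 ^ (k - 1) with hMdef
  have hM1 : (1 : ℝ) ≤ M := by rw [hMdef]; exact one_le_pow₀ one_le_two
  refine ⟨2 * M + 12, by linarith, ?_⟩
  intro N _ hN ν hν hνavg ε η hε hε1 hη hη2 G hG
  have hNpos : (0 : ℝ) < N := by exact_mod_cast hN.pos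
  have hεη : 0 < ε * η := mul_pos hε hη
  have h2η : 0 < 2 * η := by linarith
  set m : ℕ := ⌊1 / (2 * η)⌋₊ with hmdef
  have hm_le : (m : ℝ) ≤ 1 / (2 * η) := Nat.floor_le (by positivity)
  have hm_lt : 1 / (2 * η) < (m : ℝ) + 1 := Nat.lt_floor_add_one _
  have hm1 : 1 ≤ m := by
    rw [hmdef]
    apply Nat.le_floor
    rw [Nat.cast_one, le_div_iff₀ h2η]
    linarith
  have hm1' : (1 : ℝ) ≤ (m : ℝ) := by exact_mod_cast hm1
  have hmpos : (0 : ℝ) < (m : ℝ) := by linarith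
  have h2ηm : (m : ℝ) * (2 * η) ≤ 1 := (le_div_iff₀ h2η).mp hm_le
  have h4ηm : 1 ≤ 4 * η * (m : ℝ) := by
    have hlt : 1 < ((m : ℝ) + 1) * (2 * η) := (div_lt_iff₀ h2η).mp hm_lt
    nlinarith [mul_nonneg (by linarith : (0:ℝ) ≤ (m:ℝ) - 1) h2η.le]
  have hG' : ∀ x, -M ≤ G x ∧ G x ≤ M := fun x => abs_le.mp (by rw [hMdef]; exact hG x)
  -- pigeonhole over shifted grids
  obtain ⟨j, hjm, hjmass⟩ :
      ∃ j : ℕ, j < m ∧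
        ∑ x ∈ Finset.univ.filter
            (fun x : ZMod N => ∃ n : ℤ, |G x - (ε * (n:ℝ) + 2 * ε * η * (j : ℝ))| < ε * η),
          (ν x + 1) ≤ 12 * N * η := by
    set L : ℕ → Finset (ZMod N) := fun j =>
      Finset.univ.filter
        (fun x : ZMod N => ∃ n : ℤ, |G x - (ε * (n:ℝ) + 2 * ε * η * (j : ℝ))| < ε * η) with hL
    have hdisj : ∀ i ∈ Finset.range m, ∀ j ∈ Finset.range m, i ≠ j → Disjoint (L i) (L j) := by
      intro i hi j hj hij
      rw [Finset.disjoint_left]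
      intro x hxi hxj
      rw [hL, Finset.mem_filter] at hxi hxj
      obtain ⟨n, hn⟩ := hxi.2
      obtain ⟨n', hn'⟩ := hxj.2
      rw [Finset.mem_range] at hi hj
      have hij1 : (1 : ℝ) ≤ |(i : ℝ) - (j : ℝ)| := by
        have h0 : ((i:ℤ)) - (j:ℤ) ≠ 0 := sub_ne_zero.mpr (by exact_mod_cast hij)
        have h1 := Int.one_le_abs h0
        exact_mod_cast h1
      have him : |(i : ℝ) - (j : ℝ)| ≤ (m : ℝ) - 1 := by
        have hi' : (i : ℝ) + 1 ≤ (m : ℝ) := by exact_mod_cast hi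
        have hj' : (j : ℝ) + 1 ≤ (m : ℝ) := by exact_mod_cast hj
        have hi0 : (0:ℝ) ≤ (i:ℝ) := Nat.cast_nonneg i
        have hj0 : (0:ℝ) ≤ (j:ℝ) := Nat.cast_nonneg j
        rw [abs_le]; constructor <;> linarith
      have key : |(ε * (n:ℝ) + 2 * ε * η * (i : ℝ)) - (ε * (n':ℝ) + 2 * ε * η * (j : ℝ))|
          < 2 * (ε * η) := by
        calc |(ε * (n:ℝ) + 2 * ε * η * (i : ℝ)) - (ε * (n':ℝ) + 2 * ε * η * (j : ℝ))|
            ≤ |(ε * (n:ℝ) + 2 * ε * η * (i : ℝ)) - G x|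
              + |G x - (ε * (n':ℝ) + 2 * ε * η * (j : ℝ))| := abs_sub_le _ _ _
          _ = |G x - (ε * (n:ℝ) + 2 * ε * η * (i : ℝ))|
              + |G x - (ε * (n':ℝ) + 2 * ε * η * (j : ℝ))| := by rw [abs_sub_comm]
          _ < ε * η + ε * η := add_lt_add hn hn'
          _ = 2 * (ε * η) := by ring
      rcases eq_or_ne n n' with rfl | hnn
      · rw [show (ε * (n:ℝ) + 2 * ε * η * (i : ℝ)) - (ε * (n:ℝ) + 2 * ε * η * (j : ℝ))
            = 2 * ε * η * ((i:ℝ) - (j:ℝ)) by ring, abs_mul,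
          abs_of_pos (by positivity : (0:ℝ) < 2 * ε * η)] at key
        nlinarith [hεη]
      · have hnn1 : (1 : ℝ) ≤ |(n : ℝ) - (n' : ℝ)| := by
          have h0 : n - n' ≠ 0 := sub_ne_zero.mpr hnn
          have h1 := Int.one_le_abs h0
          exact_mod_cast h1
        rw [show (ε * (n:ℝ) + 2 * ε * η * (i : ℝ)) - (ε * (n':ℝ) + 2 * ε * η * (j : ℝ))
            = ε * ((n:ℝ) - (n':ℝ)) + 2 * ε * η * ((i:ℝ) - (j:ℝ)) by ring] at key
        have h1 : ε ≤ |ε * ((n:ℝ) - (n':ℝ))| := by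
          rw [abs_mul, abs_of_pos hε]; nlinarith
        have h2 : |2 * ε * η * ((i:ℝ) - (j:ℝ))| ≤ ε - 2 * (ε * η) := by
          rw [abs_mul, abs_of_pos (by positivity : (0:ℝ) < 2 * ε * η)]
          nlinarith [mul_le_mul_of_nonneg_left him (by positivity : (0:ℝ) ≤ 2 * ε * η)]
        have h3 : 2 * (ε * η) ≤ |ε * ((n:ℝ) - (n':ℝ)) + 2 * ε * η * ((i:ℝ) - (j:ℝ))| := by
          have t := abs_sub_abs_le_abs_sub (ε * ((n:ℝ) - (n':ℝ)))
            (-(2 * ε * η * ((i:ℝ) - (j:ℝ))))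
          rw [abs_neg, sub_neg_eq_add] at t
          linarith
        linarith
    have hpd : Set.PairwiseDisjoint ↑(Finset.range m) L := fun i hi j hj hij =>
      hdisj i (by simpa using hi) j (by simpa using hj) hij
    have hsum_le : ∑ j ∈ Finset.range m, ∑ x ∈ L j, (ν x + 1) ≤ ∑ x : ZMod N, (ν x + 1) := by
      rw [← Finset.sum_biUnion hpd]
      exact Finset.sum_le_sum_of_subset_of_nonneg (Finset.subset_univ _)
        (fun x _ _ => by linarith [hν x])
    have htot : ∑ x : ZMod N, (ν x + 1) ≤ 3 * N := by
      have h1 : ∑ x : ZMod N, ν x ≤ 2 * N := by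
        have h := hνavg
        rw [avgZ, div_le_iff₀ hNpos] at h
        linarith
      have h2 : ∑ x : ZMod N, (ν x + 1) = (∑ x : ZMod N, ν x) + N := by
        rw [Finset.sum_add_distrib, Finset.sum_const, Finset.card_univ, ZMod.card,
          nsmul_eq_mul, mul_one]
      linarith
    by_contra hcon
    push_neg at hcon
    have hne : (Finset.range m).Nonempty := ⟨0, Finset.mem_range.mpr hm1⟩
    have hbig : ∑ _j ∈ Finset.range m, (12 * (N:ℝ) * η)
        < ∑ j ∈ Finset.range m, ∑ x ∈ L j, (ν x + 1) :=
      Finset.sum_lt_sum_of_nonempty hne (fun j hj => hcon j (Finset.mem_range.mp hj))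
    rw [Finset.sum_const, Finset.card_range, nsmul_eq_mul] at hbig
    have h3N : 3 * (N:ℝ) ≤ (m:ℝ) * (12 * N * η) := by
      nlinarith [mul_le_mul_of_nonneg_left h4ηm (by positivity : (0:ℝ) ≤ 3 * (N:ℝ))]
    linarith
  set a0 : ℝ := 2 * ε * η * (j : ℝ) with ha0def
  have ha0nn : 0 ≤ a0 := by positivity
  have hjm' : (j : ℝ) ≤ (m : ℝ) - 1 := by
    have h : (j : ℝ) + 1 ≤ (m : ℝ) := by exact_mod_cast hjm
    linarith
  have ha0le : a0 ≤ ε := by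
    rw [ha0def]
    nlinarith [mul_le_mul_of_nonneg_left hjm' (by positivity : (0:ℝ) ≤ 2 * ε * η), hεη]
  set nf : ZMod N → ℤ := fun x => ⌊(G x - a0) / ε⌋ with hnfdef
  have hnfx : ∀ x : ZMod N, nf x = ⌊(G x - a0) / ε⌋ := fun x => rfl
  have hfl1 : ∀ x : ZMod N, ε * ((nf x : ℝ)) ≤ G x - a0 := by
    intro x
    have h := Int.floor_le ((G x - a0) / ε)
    have h2 := mul_le_mul_of_nonneg_right h hε.le
    rw [div_mul_cancel₀ _ (ne_of_gt hε)] at h2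
    calc ε * ((nf x : ℝ)) = (⌊(G x - a0) / ε⌋ : ℝ) * ε := by rw [hnfx]; ring
      _ ≤ G x - a0 := h2
  have hfl2 : ∀ x : ZMod N, G x - a0 < ε * ((nf x : ℝ)) + ε := by
    intro x
    have h := Int.lt_floor_add_one ((G x - a0) / ε)
    have h2 := mul_lt_mul_of_pos_right h hε
    rw [add_mul, one_mul, div_mul_cancel₀ _ (ne_of_gt hε)] at h2
    calc G x - a0 < (⌊(G x - a0) / ε⌋ : ℝ) * ε + ε := h2
      _ = ε * ((nf x : ℝ)) + ε := by rw [hnfx]; ring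
  set B : Finset (Finset (ZMod N)) :=
    Finset.univ.image (fun x => Finset.univ.filter (fun y => nf y = nf x)) with hBdef
  refine ⟨B, ?_, ?_, ?_, ?_, ?_, ?_⟩
  · -- nonempty
    intro A hA
    rw [hBdef, Finset.mem_image] at hA
    obtain ⟨x, -, rfl⟩ := hA
    exact ⟨x, Finset.mem_filter.mpr ⟨Finset.mem_univ x, rfl⟩⟩
  · -- disjoint
    intro A hA A' hA' hne
    rw [hBdef, Finset.mem_image] at hA hA'
    obtain ⟨x, -, rfl⟩ := hA
    obtain ⟨x', -, rfl⟩ := hA'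
    by_cases h : nf x = nf x'
    · exact absurd (by rw [h]) hne
    · rw [Finset.disjoint_left]
      intro y hy hy'
      exact h (((Finset.mem_filter.mp hy).2).symm.trans (Finset.mem_filter.mp hy').2)
  · -- cover
    intro x
    exact ⟨_, Finset.mem_image_of_mem _ (Finset.mem_univ x),
      Finset.mem_filter.mpr ⟨Finset.mem_univ x, rfl⟩⟩
  · -- cardinality
    set lo : ℤ := ⌊(-M - ε) / ε⌋ with hlodef
    set hi : ℤ := ⌊M / ε⌋ with hhidef
    have hsub : Finset.univ.image nf ⊆ Finset.Icc lo hi := by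
      intro n hn
      rw [Finset.mem_image] at hn
      obtain ⟨x, -, rfl⟩ := hn
      rw [Finset.mem_Icc, hnfx]
      constructor
      · rw [hlodef]
        exact Int.floor_mono ((div_le_div_iff_of_pos_right hε).mpr (by linarith [(hG' x).1]))
      · rw [hhidef]
        exact Int.floor_mono ((div_le_div_iff_of_pos_right hε).mpr (by linarith [(hG' x).2]))
    have hlohi : lo ≤ hi := by
      rw [hlodef, hhidef]
      exact Int.floor_mono ((div_le_div_iff_of_pos_right hε).mpr (by linarith))
    have h2 : B.card ≤ (Finset.Icc lo hi).card := by
      have h1 : B = (Finset.univ.image nf).image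
          (fun n : ℤ => Finset.univ.filter (fun y => nf y = n)) := by
        rw [hBdef, Finset.image_image]
        rfl
      rw [h1]
      exact Finset.card_image_le.trans (Finset.card_le_card hsub)
    have h3 : ((Finset.Icc lo hi).card : ℝ) ≤ (hi : ℝ) + 1 - (lo : ℝ) := by
      rw [Int.card_Icc]
      have e : (((hi + 1 - lo).toNat : ℕ) : ℤ) = hi + 1 - lo :=
        Int.toNat_of_nonneg (by omega)
      have e' : (((hi + 1 - lo).toNat : ℕ) : ℝ) = ((hi : ℝ) + 1 - (lo : ℝ)) := by
        exact_mod_cast congrArg (Int.cast : ℤ → ℝ) e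
      rw [e']
    have hhi' : (hi : ℝ) * ε ≤ M := by
      have h := Int.floor_le (M / ε)
      rw [← hhidef] at h
      exact (le_div_iff₀ hε).mp h
    have hlo' : -M - 2 * ε < (lo : ℝ) * ε := by
      have h := Int.sub_one_lt_floor ((-M - ε) / ε)
      rw [← hlodef] at h
      have h2' := mul_lt_mul_of_pos_right h hε
      rw [sub_mul, one_mul, div_mul_cancel₀ _ (ne_of_gt hε)] at h2'
      linarith
    rw [le_div_iff₀ hε]
    calc (B.card : ℝ) * ε ≤ ((hi : ℝ) + 1 - (lo : ℝ)) * ε := by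
          apply mul_le_mul_of_nonneg_right _ hε.le
          exact le_trans (by exact_mod_cast h2) h3
      _ = (hi : ℝ) * ε + ε - (lo : ℝ) * ε := by ring
      _ ≤ 2 * M + 12 := by linarith
  · -- diameter
    intro A hA x hx y hy
    rw [hBdef, Finset.mem_image] at hA
    obtain ⟨x₀, -, rfl⟩ := hA
    rw [Finset.mem_filter] at hx hy
    have hx2 := hx.2
    have hy2 := hy.2
    have h1 := hfl1 x
    have h2 := hfl2 x
    have h3 := hfl1 y
    have h4 := hfl2 y
    rw [hx2] at h1 h2
    rw [hy2] at h3 h4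
    rw [abs_le]
    constructor <;> linarith
  · -- approximation by continuous functions
    intro A hA
    rw [hBdef, Finset.mem_image] at hA
    obtain ⟨x₀, -, rfl⟩ := hA
    set nn : ℤ := nf x₀ with hnndef
    set aa : ℝ := a0 + ε * (nn : ℝ) with haa
    set bb : ℝ := aa + ε with hbb
    refine ⟨fun t => max 0 (min 1 (min ((t - aa) / (ε * η)) ((bb - t) / (ε * η)))),
      ?_, ?_, ?_, ?_⟩
    · exact continuous_const.max (continuous_const.min
        (((continuous_id.sub continuous_const).div_const _).min
          ((continuous_const.sub continuous_id).div_const _)))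
    · intro t
      exact ⟨le_max_left _ _, max_le zero_le_one (min_le_left _ _)⟩
    · intro s t
      refine le_trans (clampLip aa bb (ε * η) hεη s t) ?_
      rw [div_mul_eq_mul_div]
      gcongr
      nlinarith [abs_nonneg (s - t), hM1]
    · have key : ∀ x : ZMod N,
          |(if x ∈ Finset.univ.filter (fun y => nf y = nn) then (1:ℝ) else 0) -
            max 0 (min 1 (min ((G x - aa) / (ε * η)) ((bb - G x) / (ε * η))))| * (ν x + 1) ≤
          (if (∃ n : ℤ, |G x - (ε * (n:ℝ) + a0)| < ε * η) then (1:ℝ) else 0) * (ν x + 1) := by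
        intro x
        have hw0 : (0:ℝ) ≤ ν x + 1 := by linarith [hν x]
        have hb0 : (0:ℝ) ≤ max 0 (min 1 (min ((G x - aa) / (ε * η)) ((bb - G x) / (ε * η)))) :=
          le_max_left _ _
        have hb1 : max 0 (min 1 (min ((G x - aa) / (ε * η)) ((bb - G x) / (ε * η)))) ≤ 1 :=
          max_le zero_le_one (min_le_left _ _)
        by_cases hPx : ∃ n : ℤ, |G x - (ε * (n:ℝ) + a0)| < ε * η
        · rw [if_pos hPx, one_mul]
          refine mul_le_of_le_one_left hw0 ?_
          split_ifs <;> rw [abs_le] <;> constructor <;> linarith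
        · rw [if_neg hPx, zero_mul]
          push_neg at hPx
          have heq : (if x ∈ Finset.univ.filter (fun y => nf y = nn) then (1:ℝ) else 0) =
              max 0 (min 1 (min ((G x - aa) / (ε * η)) ((bb - G x) / (ε * η)))) := by
            by_cases hxA : nf x = nn
            · rw [if_pos (Finset.mem_filter.mpr ⟨Finset.mem_univ x, hxA⟩)]
              have h1 := hfl1 x
              have h2 := hfl2 x
              rw [hxA] at h1 h2
              have g1 := hPx nn
              have g2 := hPx (nn + 1)
              rw [show (ε * (((nn:ℤ) + 1 : ℤ) : ℝ) + a0) = ε * (nn:ℝ) + a0 + ε by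
                push_cast; ring] at g2
              have hga : aa + ε * η ≤ G x := by
                rw [abs_of_nonneg (by linarith)] at g1
                linarith
              have hgb : G x ≤ bb - ε * η := by
                rw [abs_of_nonpos (by linarith)] at g2
                linarith
              have p1 : (1:ℝ) ≤ (G x - aa) / (ε * η) := by
                rw [le_div_iff₀ hεη]; linarith
              have p2 : (1:ℝ) ≤ (bb - G x) / (ε * η) := by
                rw [le_div_iff₀ hεη]; linarith
              rw [min_eq_left (le_min p1 p2), max_eq_right zero_le_one]
            · rw [if_neg (by simp [hxA])]
              have h1 := hfl1 x
              have h2 := hfl2 x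
              have hout : G x < aa ∨ bb ≤ G x := by
                by_contra hcon
                push_neg at hcon
                apply hxA
                have hlow : (nn:ℝ) ≤ (G x - a0) / ε := by
                  rw [le_div_iff₀ hε]; linarith [hcon.1]
                have hhigh : (G x - a0) / ε < (nn:ℝ) + 1 := by
                  rw [div_lt_iff₀ hε]; linarith [hcon.2]
                rw [hnfx]
                exact Int.floor_eq_iff.mpr ⟨hlow, by exact_mod_cast hhigh⟩
              rcases hout with h | h
              · have hne : (G x - aa) / (ε * η) ≤ 0 :=
                  le_of_lt (div_neg_of_neg_of_pos (by linarith) hεη)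
                exact (max_eq_left
                  ((min_le_right _ _).trans ((min_le_left _ _).trans hne))).symm
              · have hne : (bb - G x) / (ε * η) ≤ 0 :=
                  div_nonpos_of_nonpos_of_nonneg (by linarith) hεη.le
                exact (max_eq_left
                  ((min_le_right _ _).trans ((min_le_right _ _).trans hne))).symm
          rw [heq, sub_self, abs_zero, zero_mul]
      have hsum : ∑ x : ZMod N,
          |(if x ∈ Finset.univ.filter (fun y => nf y = nn) then (1:ℝ) else 0) -
            max 0 (min 1 (min ((G x - aa) / (ε * η)) ((bb - G x) / (ε * η))))| * (ν x + 1)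
          ≤ 12 * N * η := by
        calc ∑ x : ZMod N,
            |(if x ∈ Finset.univ.filter (fun y => nf y = nn) then (1:ℝ) else 0) -
              max 0 (min 1 (min ((G x - aa) / (ε * η)) ((bb - G x) / (ε * η))))| * (ν x + 1)
            ≤ ∑ x : ZMod N,
              (if (∃ n : ℤ, |G x - (ε * (n:ℝ) + a0)| < ε * η) then (1:ℝ) else 0) * (ν x + 1) :=
              Finset.sum_le_sum (fun x _ => key x)
          _ = ∑ x ∈ Finset.univ.filter
              (fun x : ZMod N => ∃ n : ℤ, |G x - (ε * (n:ℝ) + a0)| < ε * η), (ν x + 1) := by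
              rw [Finset.sum_filter]
              exact Finset.sum_congr rfl (fun x _ => by
                by_cases h : ∃ n : ℤ, |G x - (ε * (n:ℝ) + a0)| < ε * η <;> simp [h])
          _ ≤ 12 * N * η := hjmass
      rw [avgZ, div_le_iff₀ hNpos]
      calc ∑ x : ZMod N,
          |(if x ∈ Finset.univ.filter (fun y => nf y = nn) then (1:ℝ) else 0) -
            max 0 (min 1 (min ((G x - aa) / (ε * η)) ((bb - G x) / (ε * η))))| * (ν x + 1)
          ≤ 12 * N * η := hsum
        _ ≤ (2 * M + 12) * η * N := by nlinarith [mul_nonneg (mul_nonneg (by linarith : (0:ℝ) ≤ 2 * M) hη.le) hNpos.le]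
end
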